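/- arXiv:1405.2603 — 3 statements merged into one kernel-verified Lean document; each statement's English description precedes it below -/
import Mathlib

section
/- Let C be a finite set with a descent statistic Des : C → subsets of {1,…,n−1} and involutions φ_i (2 ≤ i ≤ n−1) satisfying conditions (i) and (ii.b), and let G_C be the colored graph on C with an edge of color i between c and φ_i(c) whenever φ_i(c) ≠ c. Then the colored edges of any connected component of G_C determine the descent sets of its vertices up to a single global replacement of every descent set by its complement in {1,…,n−1}: any two descent statistics compatible with conditions (i) and (ii.b) and the same colored edges on that component either agree on the component or are complements of each other on every vertex of the component. -/
open MvPolynomial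

noncomputable section

/-! ### Permutations of ℕ with finite support (the group `S_∞`, 0-indexed) -/

/-- A permutation of `ℕ` moves only finitely many points, i.e. lies in `S_∞`. -/
def PermFinSupp (w : Equiv.Perm ℕ) : Prop := {i : ℕ | w i ≠ i}.Finite

/-- The length (number of inversions) of a permutation. -/
def permLength (w : Equiv.Perm ℕ) : ℕ :=
  Nat.card {p : ℕ × ℕ // p.1 < p.2 ∧ w p.2 < w p.1}

def w0fun (n : ℕ) : ℕ → ℕ := fun i => if i < n then n - 1 - i else i

lemma w0fun_involutive (n : ℕ) : Function.Involutive (w0fun n) := by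
  intro i
  unfold w0fun
  by_cases h : i < n
  · have h2 : n - 1 - i < n := by omega
    rw [if_pos h, if_pos h2]
    omega
  · rw [if_neg h, if_neg h]

/-- The longest element of `S_n` inside `S_∞` (0-indexed: `i ↦ n-1-i` for `i < n`). -/
def w0 (n : ℕ) : Equiv.Perm ℕ := (w0fun_involutive n).toPerm

/-- A family of polynomials indexed by permutations satisfying the defining
divided-difference recursion of the Schubert polynomials:
`𝔖_{w₀(n)} = z_1^{n-1} ⋯ z_{n-1}` (variables 0-indexed: `X i = z_{i+1}`) and
`(z_i - z_{i+1}) · 𝔖_{w sᵢ} = 𝔖_w - sᵢ·𝔖_w` whenever `ℓ(w) = ℓ(w sᵢ) + 1`. -/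
def IsSchubertFamily (S : Equiv.Perm ℕ → MvPolynomial ℕ ℤ) : Prop :=
  (∀ n : ℕ, S (w0 n) = ∏ i ∈ Finset.range n, (X i : MvPolynomial ℕ ℤ) ^ (n - 1 - i)) ∧
  ∀ (w : Equiv.Perm ℕ) (i : ℕ),
    permLength w = permLength (w * Equiv.swap i (i + 1)) + 1 →
    (X i - X (i + 1)) * S (w * Equiv.swap i (i + 1)) =
      S w - rename (Equiv.swap i (i + 1)) (S w)

/-! ### Schur polynomials in finitely many variables -/

/-- A filling of the cells of `μ` with values in `Fin k` is semistandard if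
rows weakly increase and columns strictly increase. -/
def IsSsytFilling (μ : YoungDiagram) (k : ℕ) (T : {c // c ∈ μ.cells} → Fin k) : Prop :=
  (∀ c d : {c // c ∈ μ.cells}, c.1.1 = d.1.1 → c.1.2 ≤ d.1.2 → T c ≤ T d) ∧
  (∀ c d : {c // c ∈ μ.cells}, c.1.2 = d.1.2 → c.1.1 < d.1.1 → T c < T d)

/-- The Schur polynomial `s_μ(z_1,…,z_k)` (variables 0-indexed), as the generating
function of semistandard Young tableaux of shape `μ` with entries in `{1,…,k}`. -/
def schurPoly (μ : YoungDiagram) (k : ℕ) : MvPolynomial ℕ ℤ :=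
  ∑ᶠ T ∈ {T : {c // c ∈ μ.cells} → Fin k | IsSsytFilling μ k T},
    ∏ c : {c // c ∈ μ.cells}, (X ((T c : ℕ)) : MvPolynomial ℕ ℤ)

/-- The complete homogeneous polynomial `h_m(z_1,…,z_k)`: the sum of all monomials
of degree `m` in the (0-indexed) variables `X 0, …, X (k-1)`. -/
def hPoly (m k : ℕ) : MvPolynomial ℕ ℤ :=
  ∑ s ∈ (Finset.univ : Finset (Fin k)).sym m,
    (Multiset.map (fun i : Fin k => (X (i : ℕ) : MvPolynomial ℕ ℤ)) ↑s).prod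


/-! ### Quasisymmetric functions and Schur functions as formal power series -/

/-- The exponent vector of the monomial `x_{f 0} ⋯ x_{f (n-1)}`. -/
def seqMonomial {n : ℕ} (f : Fin n → ℕ) : ℕ →₀ ℕ := ∑ j, Finsupp.single (f j) 1

/-- Gessel's fundamental quasisymmetric function `Q_D` of degree `n` for
`D ⊆ {1,…,n-1}`, as a formal power series in the variables `x_0, x_1, …`:
the coefficient of `x^α` counts (there is at most one) weakly increasing
sequences `f : Fin n → ℕ` which strictly increase from position `i` to `i+1`
(1-indexed) for each `i ∈ D`, with content `α`. -/
def fundamentalQSym (n : ℕ) (D : Finset ℕ) : MvPowerSeries ℕ ℤ :=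
  fun α => (Nat.card {f : Fin n → ℕ //
    Monotone f ∧
    (∀ i : ℕ, i ∈ D → 0 < i → ∀ h : i < n, f ⟨i - 1, by omega⟩ < f ⟨i, h⟩) ∧
    seqMonomial f = α} : ℤ)

/-- The content (exponent vector) of a semistandard Young tableau. -/
def ssytMonomial (μ : YoungDiagram) (T : SemistandardYoungTableau μ) : ℕ →₀ ℕ :=
  ∑ c ∈ μ.cells, Finsupp.single (T c.1 c.2) 1

/-- The Schur function `s_μ` as a formal power series in `x_0, x_1, …`:
the coefficient of `x^α` is the number of semistandard Young tableaux of
shape `μ` and content `α`. -/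
def schurFunction (μ : YoungDiagram) : MvPowerSeries ℕ ℤ :=
  fun α => (Nat.card {T : SemistandardYoungTableau μ // ssytMonomial μ T = α} : ℤ)

/-- A formal power series is a symmetric function if its coefficients are invariant
under every permutation of the variables. -/
def PSIsSymmetric (F : MvPowerSeries ℕ ℤ) : Prop :=
  ∀ (g : Equiv.Perm ℕ) (α : ℕ →₀ ℕ),
    MvPowerSeries.coeff (Finsupp.equivMapDomain g α) F = MvPowerSeries.coeff α F

/-- A formal power series is a nonnegative integer combination of Schur functions. -/
def SchurNonneg (F : MvPowerSeries ℕ ℤ) : Prop :=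
  ∃ m : YoungDiagram → ℕ, (Function.support m).Finite ∧
    F = ∑ᶠ μ : YoungDiagram, (m μ : ℤ) • schurFunction μ

/-! ### Standard Young tableaux -/

/-- A semistandard Young tableau is standard if each value `0,…,|μ|-1` occurs in
exactly one cell (0-indexed values; with distinct entries rows are forced to
strictly increase). -/
def IsStandardSyt (μ : YoungDiagram) (T : SemistandardYoungTableau μ) : Prop :=
  ∀ m : ℕ, m < μ.card → ∃! c : ℕ × ℕ, c ∈ μ.cells ∧ T c.1 c.2 = m

/-- `f^μ`: the number of standard Young tableaux of shape `μ`. -/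
def sytCount (μ : YoungDiagram) : ℕ :=
  Nat.card {T : SemistandardYoungTableau μ // IsStandardSyt μ T}

open Classical in
/-- The descent set of a standard Young tableau: those `i ∈ {1,…,n-1}` (1-indexed
values) such that the value `i+1` lies in a higher row than `i`; with 0-indexed
entries, the entry `i` lies in a higher row than the entry `i-1`. -/
def sytDes (μ : YoungDiagram) (T : SemistandardYoungTableau μ) : Finset ℕ :=
  (Finset.Ico 1 μ.card).filter fun i =>
    ∃ c ∈ μ.cells, ∃ d ∈ μ.cells, T c.1 c.2 = i - 1 ∧ T d.1 d.2 = i ∧ c.1 < d.1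


/-! ### The Grassmannian-Bruhat order and the k-Bruhat order -/

/-- The Grassmannian-Bruhat order `η ⪯ ζ` on permutations of `ℕ`. -/
def GBle (η ζ : Equiv.Perm ℕ) : Prop :=
  (∀ a : ℕ, a < ζ a → a ≤ η a ∧ η a ≤ ζ a) ∧
  (∀ b : ℕ, ζ b < b → η b ≤ b ∧ ζ b ≤ η b) ∧
  (∀ a b : ℕ, a < b → ((a < ζ a ∧ b < ζ b) ∨ (ζ a < a ∧ ζ b < b)) →
    ζ a < ζ b → η a < η b)

/-- Covers in the Grassmannian-Bruhat order. -/
def GBCovBy (η ζ : Equiv.Perm ℕ) : Prop :=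
  GBle η ζ ∧ η ≠ ζ ∧ ∀ ξ, GBle η ξ → GBle ξ ζ → ξ = η ∨ ξ = ζ

/-- The interval `[η, ζ]` in the Grassmannian-Bruhat order. -/
def GBInterval (η ζ : Equiv.Perm ℕ) : Set (Equiv.Perm ℕ) := {ξ | GBle η ξ ∧ GBle ξ ζ}

/-- Successively left-multiply `u` by the transpositions recorded in the list `c`:
a list `[(a₁,b₁),…,(aₙ,bₙ)]` yields `t_{aₙbₙ} ⋯ t_{a₁b₁} u`. -/
def leftMulProd (u : Equiv.Perm ℕ) (c : List (ℕ × ℕ)) : Equiv.Perm ℕ :=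
  c.foldl (fun g p => Equiv.swap p.1 p.2 * g) u

/-- A list of transpositions `(t_{a₁b₁},…,t_{aₙbₙ})` (with `aᵢ < bᵢ`) records a
saturated chain from `e` in the Grassmannian-Bruhat order: the partial products
`t_{aᵢbᵢ} ⋯ t_{a₁b₁}` form successive covers. -/
def IsGBChain (c : List (ℕ × ℕ)) : Prop :=
  (∀ p ∈ c, p.1 < p.2) ∧
  ∀ i : ℕ, i < c.length →
    GBCovBy (leftMulProd 1 (c.take i)) (leftMulProd 1 (c.take (i + 1)))

/-- A saturated chain of the interval `[e,ζ]` in the Grassmannian-Bruhat order. -/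
def GBChainTo (ζ : Equiv.Perm ℕ) (c : List (ℕ × ℕ)) : Prop :=
  IsGBChain c ∧ leftMulProd 1 c = ζ

/-- The descent set of a chain recorded by a list of transpositions; its label word
is `b₁,…,bₙ` (the larger entries) and `i ∈ Des` (for `1 ≤ i ≤ n-1`) iff `bᵢ > bᵢ₊₁`. -/
def chainDes (c : List (ℕ × ℕ)) : Finset ℕ :=
  (Finset.Ico 1 c.length).filter fun i => (c.getD i (0, 0)).2 < (c.getD (i - 1) (0, 0)).2

/-- Covers in the `k`-Bruhat order (0-indexed positions: the paper's `i ≤ k < j`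
becomes `i < k ≤ j`): `w = u t_{ij}` with `ℓ(w) = ℓ(u) + 1`. -/
def kCovBy (k : ℕ) (u w : Equiv.Perm ℕ) : Prop :=
  permLength w = permLength u + 1 ∧
  ∃ i j : ℕ, i < k ∧ k ≤ j ∧ w = u * Equiv.swap i j

/-- The `k`-Bruhat order `≤ₖ`. -/
def kle (k : ℕ) : Equiv.Perm ℕ → Equiv.Perm ℕ → Prop :=
  Relation.ReflTransGen (kCovBy k)

/-- The interval `[u,w]ₖ` in the `k`-Bruhat order. -/
def kInterval (k : ℕ) (u w : Equiv.Perm ℕ) : Set (Equiv.Perm ℕ) :=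
  {x | kle k u x ∧ kle k x w}

/-- A list of transpositions `(a,b)` (with `a < b`, `b` the label) records a
saturated chain in the `k`-Bruhat order starting at `u`: each step is a cover
`η ⋖ₖ t_{ab} η`. -/
def IsKChainFrom (k : ℕ) (u : Equiv.Perm ℕ) (c : List (ℕ × ℕ)) : Prop :=
  (∀ p ∈ c, p.1 < p.2) ∧
  ∀ i : ℕ, i < c.length →
    kCovBy k (leftMulProd u (c.take i)) (leftMulProd u (c.take (i + 1)))

/-- Covers of a subset `s` with respect to a relation `le`. -/
def CovWithin {α : Type*} (le : α → α → Prop) (s : Set α) (x y : α) : Prop :=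
  x ∈ s ∧ y ∈ s ∧ le x y ∧ x ≠ y ∧ ∀ z ∈ s, le x z → le z y → z = x ∨ z = y

/-- The specification of the relabelling map `ι_I` induced by the strictly monotone
enumeration `g` of `I`: `ι_I(ζ)` fixes points outside the range of `g` and sends
`g m` to `g (ζ m)`. -/
def IotaSpec (g : ℕ → ℕ) (ζ ξ : Equiv.Perm ℕ) : Prop :=
  (∀ j : ℕ, (∀ m : ℕ, g m ≠ j) → ξ j = j) ∧ ∀ m : ℕ, ξ (g m) = g (ζ m)


/-! ### Substitutions on chains, forbidden configurations, and the rules A, B, C -/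

/-- Substitution (i): `(t_{βγ},t_{γδ},t_{αγ}) ↔ (t_{βδ},t_{αβ},t_{βγ})` for `α<β<γ<δ`. -/
def subI (s t : List (ℕ × ℕ)) : Prop :=
  ∃ α β γ δ : ℕ, α < β ∧ β < γ ∧ γ < δ ∧
    ((s = [(β,γ),(γ,δ),(α,γ)] ∧ t = [(β,δ),(α,β),(β,γ)]) ∨
     (s = [(β,δ),(α,β),(β,γ)] ∧ t = [(β,γ),(γ,δ),(α,γ)]))

/-- Substitution (ii): `(t_{αγ},t_{γδ},t_{βγ}) ↔ (t_{βγ},t_{αβ},t_{βδ})` for `α<β<γ<δ`. -/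
def subII (s t : List (ℕ × ℕ)) : Prop :=
  ∃ α β γ δ : ℕ, α < β ∧ β < γ ∧ γ < δ ∧
    ((s = [(α,γ),(γ,δ),(β,γ)] ∧ t = [(β,γ),(α,β),(β,δ)]) ∨
     (s = [(β,γ),(α,β),(β,δ)] ∧ t = [(α,γ),(γ,δ),(β,γ)]))

/-- Substitution (iii): `(t_{αβ},t_{γδ}) ↔ (t_{γδ},t_{αβ})` if `β<γ` or `α<γ<δ<β`. -/
def subIII (s t : List (ℕ × ℕ)) : Prop :=
  ∃ x y : ℕ × ℕ, (x.2 < y.1 ∨ (x.1 < y.1 ∧ y.2 < x.2)) ∧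
    ((s = [x, y] ∧ t = [y, x]) ∨ (s = [y, x] ∧ t = [x, y]))

/-- One substitution (i), (ii) or (iii) applied to consecutive entries of a list. -/
def SubstStep (c d : List (ℕ × ℕ)) : Prop :=
  ∃ pre post s t, c = pre ++ s ++ post ∧ d = pre ++ t ++ post ∧
    (subI s t ∨ subII s t ∨ subIII s t)

/-- `d` is obtained from `c` by exactly `m` substitutions. -/
def reachIn : ℕ → List (ℕ × ℕ) → List (ℕ × ℕ) → Prop
  | 0, c, d => c = d
  | m + 1, c, d => ∃ e, SubstStep c e ∧ reachIn m e d

/-- The minimal number of substitutions needed to transform `c` into `d`. -/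
def substDist (c d : List (ℕ × ℕ)) : ℕ := sInf {m | reachIn m c d}

/-- Forbidden configuration (iv): consecutive `t_{αγ},t_{βδ}` or `t_{βδ},t_{αγ}`
with `α ≤ β < γ ≤ δ`. -/
def badIV (c : List (ℕ × ℕ)) : Prop :=
  ∃ pre post : List (ℕ × ℕ), ∃ α β γ δ : ℕ, α ≤ β ∧ β < γ ∧ γ ≤ δ ∧
    (c = pre ++ [(α,γ),(β,δ)] ++ post ∨ c = pre ++ [(β,δ),(α,γ)] ++ post)

/-- Forbidden configuration (v): consecutive `t_{βγ},t_{αβ},t_{βγ}` or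
`t_{αβ},t_{βγ},t_{αβ}` with `α < β < γ`. -/
def badV (c : List (ℕ × ℕ)) : Prop :=
  ∃ pre post : List (ℕ × ℕ), ∃ α β γ : ℕ, α < β ∧ β < γ ∧
    (c = pre ++ [(β,γ),(α,β),(β,γ)] ++ post ∨ c = pre ++ [(α,β),(β,γ),(α,β)] ++ post)

/-- Two transpositions (recorded as pairs with increasing entries) are disjoint:
their supports are disjoint intervals or nested intervals (noncrossing, nonintersecting). -/
def disjointT (x y : ℕ × ℕ) : Prop :=
  x.2 < y.1 ∨ y.2 < x.1 ∨ (x.1 < y.1 ∧ y.2 < x.2) ∨ (y.1 < x.1 ∧ x.2 < y.2)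

/-- Rule (A): `(t_{βγ},t_{αβ},t_{βδ}) ↔ (t_{αγ},t_{γδ},t_{βγ})` and
`(t_{βδ},t_{αβ},t_{βγ}) ↔ (t_{βγ},t_{γδ},t_{αγ})` for `α<β<γ<δ`. -/
def ruleA (s t : List (ℕ × ℕ)) : Prop :=
  ∃ α β γ δ : ℕ, α < β ∧ β < γ ∧ γ < δ ∧
    ((s = [(β,γ),(α,β),(β,δ)] ∧ t = [(α,γ),(γ,δ),(β,γ)]) ∨
     (s = [(α,γ),(γ,δ),(β,γ)] ∧ t = [(β,γ),(α,β),(β,δ)]) ∨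
     (s = [(β,δ),(α,β),(β,γ)] ∧ t = [(β,γ),(γ,δ),(α,γ)]) ∨
     (s = [(β,γ),(γ,δ),(α,γ)] ∧ t = [(β,δ),(α,β),(β,γ)]))

/-- Rule (B): `(t_{bβ},t_{aα},t_{cγ}) ↔ (t_{bβ},t_{cγ},t_{aα})` and
`(t_{cγ},t_{aα},t_{bβ}) ↔ (t_{aα},t_{cγ},t_{bβ})` where the labels satisfy
`α < β < γ` and `t_{aα}`, `t_{cγ}` are disjoint. -/
def ruleB (s t : List (ℕ × ℕ)) : Prop :=
  ∃ x y z : ℕ × ℕ, y.2 < x.2 ∧ x.2 < z.2 ∧ disjointT y z ∧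
    ((s = [x, y, z] ∧ t = [x, z, y]) ∨ (s = [x, z, y] ∧ t = [x, y, z]) ∨
     (s = [z, y, x] ∧ t = [y, z, x]) ∨ (s = [y, z, x] ∧ t = [z, y, x]))

/-- Rule (C): `(t_{pq},t_{αβ},t_{βγ}) ↔ (t_{αβ},t_{βγ},t_{pq})` and
`(t_{βγ},t_{αβ},t_{pq}) ↔ (t_{pq},t_{βγ},t_{αβ})` for `α<β<p<q<γ`. -/
def ruleC (s t : List (ℕ × ℕ)) : Prop :=
  ∃ α β γ p q : ℕ, α < β ∧ β < p ∧ p < q ∧ q < γ ∧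
    ((s = [(p,q),(α,β),(β,γ)] ∧ t = [(α,β),(β,γ),(p,q)]) ∨
     (s = [(α,β),(β,γ),(p,q)] ∧ t = [(p,q),(α,β),(β,γ)]) ∨
     (s = [(β,γ),(α,β),(p,q)] ∧ t = [(p,q),(β,γ),(α,β)]) ∨
     (s = [(p,q),(β,γ),(α,β)] ∧ t = [(β,γ),(α,β),(p,q)]))

/-- One of the rules (A), (B), (C). -/
def ruleABC (s t : List (ℕ × ℕ)) : Prop := ruleA s t ∨ ruleB s t ∨ ruleC s t

/-! ### Dual equivalence (Assaf) -/

section DualEquivalence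

variable {C : Type*}

/-- The family `φ` of involutions, guarded to act only in the range `2 ≤ i ≤ n-1`
(outside of this range it is regarded as the identity). -/
def phiG (n : ℕ) (φ : ℕ → C → C) (i : ℕ) : C → C :=
  if 2 ≤ i ∧ i ≤ n - 1 then φ i else id

/-- The restricted descent set `Des_{(i,j)}(c)`: intersect `Des c` with
`[i-1, j]` and subtract `i-2` from each element. -/
def resDes (Des : C → Finset ℕ) (i j : ℕ) (c : C) : Finset ℕ :=
  (Des c ∩ Finset.Icc (i - 1) j).image fun x => x - (i - 2)

/-- The `∼_{(i,j)}`-equivalence class of `c`: the equivalence generated by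
`a ∼ φ_k a` for `i ≤ k ≤ j`. -/
def deClass (n : ℕ) (φ : ℕ → C → C) (i j : ℕ) (c : C) : Set C :=
  {a | Relation.EqvGen (fun a b => ∃ m, i ≤ m ∧ m ≤ j ∧ b = phiG n φ m a) c a}

/-- Condition (i): `φ_i` fixes `c` exactly when `c` has descents at both of
`i-1, i` or at neither. -/
def CondI (n : ℕ) (Des : C → Finset ℕ) (φ : ℕ → C → C) : Prop :=
  ∀ i : ℕ, 2 ≤ i → i ≤ n - 1 → ∀ c : C,
    (phiG n φ i c = c ↔
      (Des c ∩ {i - 1, i} = (∅ : Finset ℕ) ∨ Des c ∩ {i - 1, i} = {i - 1, i}))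

/-- Condition (ii.b): when `φ_i c ≠ c`, for each `j ∈ {i-1, i}` exactly one of
`c`, `φ_i c` has a descent at `j`. -/
def CondIIb (n : ℕ) (Des : C → Finset ℕ) (φ : ℕ → C → C) : Prop :=
  ∀ i : ℕ, 2 ≤ i → i ≤ n - 1 → ∀ c : C, phiG n φ i c ≠ c →
    ((i - 1 ∈ Des c ↔ i - 1 ∉ Des (phiG n φ i c)) ∧
     (i ∈ Des c ↔ i ∉ Des (phiG n φ i c)))

/-- Conditions (involutivity), (i), (ii.a)–(ii.d), (iii) of (strong) dual equivalence. -/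
def DEConds123 (n : ℕ) (Des : C → Finset ℕ) (φ : ℕ → C → C) : Prop :=
  (∀ i : ℕ, 2 ≤ i → i ≤ n - 1 → ∀ c : C, phiG n φ i (phiG n φ i c) = c) ∧
  CondI n Des φ ∧
  (∀ i : ℕ, 2 ≤ i → i ≤ n - 1 → ∀ c : C, phiG n φ i c ≠ c →
    ∀ j, j ∉ ({i - 2, i - 1, i, i + 1} : Finset ℕ) →
      (j ∈ Des c ↔ j ∈ Des (phiG n φ i c))) ∧
  CondIIb n Des φ ∧
  (∀ i : ℕ, 2 ≤ i → i ≤ n - 1 → ∀ c : C, phiG n φ i c ≠ c →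
    ((i - 2 ∈ Des c ↔ i - 2 ∉ Des (phiG n φ i c)) → phiG n φ (i - 1) c ≠ c)) ∧
  (∀ i : ℕ, 2 ≤ i → i ≤ n - 1 → ∀ c : C, phiG n φ i c ≠ c →
    ((i + 1 ∈ Des c ↔ i + 1 ∉ Des (phiG n φ i c)) → phiG n φ (i + 1) c ≠ c)) ∧
  (∀ i j : ℕ, i + 3 ≤ j ∨ j + 3 ≤ i → ∀ c : C,
    phiG n φ i (phiG n φ j c) = phiG n φ j (phiG n φ i c))

/-- The quasisymmetric generating function of the restricted class `[c]_{(i,j)}`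
with the restricted descent statistic `Des_{(i,j)}`. -/
def restrictedGF (n : ℕ) (Des : C → Finset ℕ) (φ : ℕ → C → C) (i j : ℕ) (c : C) :
    MvPowerSeries ℕ ℤ :=
  ∑ᶠ a ∈ deClass n φ i j c, fundamentalQSym (j - i + 3) (resDes Des i j a)

/-- A flat `i`-chain `c₁,…,c_{2r}` (recorded as a list, 0-indexed). -/
def IsFlatChain (n : ℕ) (φ : ℕ → C → C) (i r : ℕ) (L : List C) : Prop :=
  L.length = 2 * r ∧ L.Nodup ∧
  (∀ c ∈ L, phiG n φ (i - 2) c ≠ c ∧ phiG n φ i c ≠ c) ∧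
  (∀ j : ℕ, 1 ≤ j → j ≤ r - 1 → ∀ h : 2 * j < L.length,
    phiG n φ (i - 1) (L.get ⟨2 * j, h⟩) = L.get ⟨2 * j, h⟩) ∧
  (∀ j : ℕ, 1 ≤ j → j ≤ r → ∀ (h1 : 2 * j - 2 < L.length) (h2 : 2 * j - 1 < L.length),
    phiG n φ i (L.get ⟨2 * j - 2, h1⟩) = L.get ⟨2 * j - 1, h2⟩) ∧
  (∀ j : ℕ, 1 ≤ j → j ≤ r - 1 → ∀ (h1 : 2 * j - 1 < L.length) (h2 : 2 * j < L.length),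
    ∃ t : ℕ, L.get ⟨2 * j, h2⟩ =
      (phiG n φ (i - 2) ∘ phiG n φ (i - 1))^[t] (phiG n φ (i - 2) (L.get ⟨2 * j - 1, h1⟩)))

/-- Condition (iv.c) on flat `i`-chains. -/
def CondIVc (n : ℕ) (φ : ℕ → C → C) : Prop :=
  ∀ i r : ℕ, 3 < i → i < n - 1 → ∀ L : List C, IsFlatChain n φ i r L →
    ∀ j : ℕ, 1 < j → j < r →
    ∀ (h1 : 2 * j - 2 < L.length) (h2 : 2 * j - 1 < L.length),
    phiG n φ (i + 1) (L.get ⟨2 * j - 2, h1⟩) ≠ L.get ⟨2 * j - 2, h1⟩ →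
    phiG n φ (i + 1) (L.get ⟨2 * j - 1, h2⟩) ≠ L.get ⟨2 * j - 1, h2⟩ →
    ((∀ m : ℕ, ∀ hm : m < L.length, m < 2 * j →
        phiG n φ (i + 1) (L.get ⟨m, hm⟩) ≠ L.get ⟨m, hm⟩) ∨
     (∀ m : ℕ, ∀ hm : m < L.length, 2 * j - 2 ≤ m →
        phiG n φ (i + 1) (L.get ⟨m, hm⟩) ≠ L.get ⟨m, hm⟩))

/-- A dual equivalence for `(C, Des)` (Definition 1.6 of Assaf–Bergeron–Sottile):
conditions (i), (ii), (iii) together with (iv.a), (iv.b), and (iv.c) with its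
reversal (indices replaced by `n+1-i`). -/
def IsDualEquivalence (n : ℕ) (Des : C → Finset ℕ) (φ : ℕ → C → C) : Prop :=
  DEConds123 n Des φ ∧
  (∀ i j : ℕ, 2 ≤ i → i < j → j ≤ i + 2 → j ≤ n - 1 → ∀ c : C,
    PSIsSymmetric (restrictedGF n Des φ i j c) ∧ SchurNonneg (restrictedGF n Des φ i j c)) ∧
  (∀ i : ℕ, 3 ≤ i → i ≤ n - 1 → ∀ c : C, phiG n φ i c ≠ c →
    phiG n φ (i - 1) c ≠ c → phiG n φ (i - 1) (phiG n φ i c) ≠ phiG n φ i c →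
    phiG n φ (i + 1) c ≠ c → phiG n φ (i + 1) (phiG n φ i c) ≠ phiG n φ i c →
    restrictedGF n Des φ (i - 1) i c = restrictedGF n Des φ i (i + 1) c) ∧
  CondIVc n φ ∧
  CondIVc n (fun i => phiG n φ (n + 1 - i))

/-- A strong dual equivalence for `(C, Des)`: conditions (i), (ii), (iii)
together with condition (iv). -/
def IsStrongDualEquivalence (n : ℕ) (Des : C → Finset ℕ) (φ : ℕ → C → C) : Prop :=
  DEConds123 n Des φ ∧
  ∀ i j : ℕ, 2 ≤ i → i < j → j ≤ i + 3 → j ≤ n - 1 → ∀ c b : C,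
    (∃ l : List ℕ, l ≠ [] ∧ (∀ x ∈ l, i ≤ x ∧ x ≤ j) ∧
      b = l.foldl (fun a x => phiG n φ x a) c) →
    ∃ l : List ℕ, l ≠ [] ∧ (∀ x ∈ l, i ≤ x ∧ x ≤ j) ∧ l.count j ≤ 1 ∧
      b = l.foldl (fun a x => phiG n φ x a) c

end DualEquivalence

/-! By (i), whether `φ_i` fixes `c` records exactly whether `i-1` and `i` are both descents
or both non-descents of `c`. Hence two statistics obeying (i) agree at one position of
`{1,…,n-1}` iff they agree at all of them: `Des₂ c` is `Des₁ c` or its complement. Along an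
edge of color `i`, (ii.b) makes both statistics flip at `i-1`, so agreement there, and with
it equality of the two descent sets, propagates through the whole connected component. -/

theorem Finset.inter_pair_eq_empty_or_eq_pair_iff {α : Type*} [DecidableEq α] (s : Finset α)
    (a b : α) : (s ∩ {a, b} = ∅ ∨ s ∩ {a, b} = {a, b}) ↔ (a ∈ s ↔ b ∈ s) := by
  rw [← disjoint_iff_inter_eq_empty, inter_eq_right, disjoint_insert_right,
    disjoint_singleton_right, insert_subset_iff, singleton_subset_iff]
  tauto

section DescentsUpToComplement

variable {C : Type*} {n : ℕ} {Des Des₁ Des₂ : C → Finset ℕ} {φ : ℕ → C → C} {i j : ℕ}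

theorem phiG_of_mem_range (h2 : 2 ≤ i) (hi : i ≤ n - 1) : phiG n φ i = φ i :=
  if_pos ⟨h2, hi⟩

theorem CondI.phiG_eq_self_iff (h : CondI n Des φ) (h2 : 2 ≤ i) (hi : i ≤ n - 1) (c : C) :
    phiG n φ i c = c ↔ (i - 1 ∈ Des c ↔ i ∈ Des c) :=
  (h i h2 hi c).trans (Finset.inter_pair_eq_empty_or_eq_pair_iff _ _ _)

theorem CondI.mem_iff_mem_iff_succ (h₁ : CondI n Des₁ φ) (h₂ : CondI n Des₂ φ) (c : C)
    (hj : 1 ≤ j) (hjn : j + 1 < n) :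
    (j ∈ Des₁ c ↔ j ∈ Des₂ c) ↔ (j + 1 ∈ Des₁ c ↔ j + 1 ∈ Des₂ c) := by
  have e₁ := h₁.phiG_eq_self_iff (i := j + 1) (by omega) (by omega) c
  have e₂ := h₂.phiG_eq_self_iff (i := j + 1) (by omega) (by omega) c
  rw [Nat.add_sub_cancel] at e₁ e₂
  tauto

theorem CondI.mem_iff_mem_iff_one (h₁ : CondI n Des₁ φ) (h₂ : CondI n Des₂ φ) (c : C)
    (hj : j ∈ Finset.Ico 1 n) : (j ∈ Des₁ c ↔ j ∈ Des₂ c) ↔ (1 ∈ Des₁ c ↔ 1 ∈ Des₂ c) := by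
  obtain ⟨hj1, hjn⟩ := Finset.mem_Ico.mp hj
  clear hj
  induction j, hj1 using Nat.le_induction with
  | base => rfl
  | succ k hk ih => exact (h₁.mem_iff_mem_iff_succ h₂ c hk hjn).symm.trans (ih (by omega))

theorem CondI.eq_iff_mem_iff (hD₁ : ∀ c, Des₁ c ⊆ Finset.Ico 1 n)
    (hD₂ : ∀ c, Des₂ c ⊆ Finset.Ico 1 n) (h₁ : CondI n Des₁ φ) (h₂ : CondI n Des₂ φ) (c : C)
    (hj : j ∈ Finset.Ico 1 n) : Des₁ c = Des₂ c ↔ (j ∈ Des₁ c ↔ j ∈ Des₂ c) := by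
  refine ⟨fun h => h ▸ Iff.rfl, fun h => Finset.ext fun x => ?_⟩
  by_cases hx : x ∈ Finset.Ico 1 n
  · exact (h₁.mem_iff_mem_iff_one h₂ c hx).mpr ((h₁.mem_iff_mem_iff_one h₂ c hj).mp h)
  · exact iff_of_false (hx <| hD₁ c ·) (hx <| hD₂ c ·)

theorem CondI.eq_sdiff_of_ne (hD₁ : ∀ c, Des₁ c ⊆ Finset.Ico 1 n)
    (hD₂ : ∀ c, Des₂ c ⊆ Finset.Ico 1 n) (h₁ : CondI n Des₁ φ) (h₂ : CondI n Des₂ φ) {c : C}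
    (hne : Des₁ c ≠ Des₂ c) : Des₂ c = Finset.Ico 1 n \ Des₁ c := by
  ext x
  rw [Finset.mem_sdiff]
  by_cases hx : x ∈ Finset.Ico 1 n
  · have := mt (h₁.eq_iff_mem_iff hD₁ hD₂ h₂ c hx).mpr hne
    tauto
  · exact iff_of_false (hx <| hD₂ c ·) (hx ·.1)

theorem eq_iff_eq_phiG_of_phiG_ne (hD₁ : ∀ c, Des₁ c ⊆ Finset.Ico 1 n)
    (hD₂ : ∀ c, Des₂ c ⊆ Finset.Ico 1 n) (h₁i : CondI n Des₁ φ) (h₁b : CondIIb n Des₁ φ)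
    (h₂i : CondI n Des₂ φ) (h₂b : CondIIb n Des₂ φ) {c : C} (h2 : 2 ≤ i) (hi : i ≤ n - 1)
    (hne : phiG n φ i c ≠ c) :
    Des₁ c = Des₂ c ↔ Des₁ (phiG n φ i c) = Des₂ (phiG n φ i c) := by
  have hmem : i - 1 ∈ Finset.Ico 1 n := Finset.mem_Ico.mpr ⟨by omega, by omega⟩
  rw [h₁i.eq_iff_mem_iff hD₁ hD₂ h₂i c hmem, h₁i.eq_iff_mem_iff hD₁ hD₂ h₂i _ hmem]
  have flip₁ := (h₁b i h2 hi c hne).1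
  have flip₂ := (h₂b i h2 hi c hne).1
  tauto

/-- Adjacency in the colored graph `G_C`. -/
def IsColoredEdge (n : ℕ) (φ : ℕ → C → C) (a b : C) : Prop :=
  ∃ i, 2 ≤ i ∧ i ≤ n - 1 ∧ b = φ i a ∧ φ i a ≠ a

theorem eq_iff_eq_of_eqvGen_isColoredEdge (hD₁ : ∀ c, Des₁ c ⊆ Finset.Ico 1 n)
    (hD₂ : ∀ c, Des₂ c ⊆ Finset.Ico 1 n) (h₁i : CondI n Des₁ φ) (h₁b : CondIIb n Des₁ φ)
    (h₂i : CondI n Des₂ φ) (h₂b : CondIIb n Des₂ φ) {a b : C}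
    (hab : Relation.EqvGen (IsColoredEdge n φ) a b) : Des₁ a = Des₂ a ↔ Des₁ b = Des₂ b := by
  induction hab with
  | rel a b hab =>
    obtain ⟨i, h2, hi, rfl, hne⟩ := hab
    rw [← phiG_of_mem_range (φ := φ) h2 hi] at hne ⊢
    exact eq_iff_eq_phiG_of_phiG_ne hD₁ hD₂ h₁i h₁b h₂i h₂b h2 hi hne
  | refl => rfl
  | symm _ _ _ ih => exact ih.symm
  | trans _ _ _ _ _ ih₁ ih₂ => exact ih₁.trans ih₂

end DescentsUpToComplement

theorem descents_determined_up_to_complement_general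
    {C : Type*} (n : ℕ) (Des₁ Des₂ : C → Finset ℕ)
    (hD₁ : ∀ c, Des₁ c ⊆ Finset.Ico 1 n) (hD₂ : ∀ c, Des₂ c ⊆ Finset.Ico 1 n)
    (φ : ℕ → C → C)
    (h₁i : CondI n Des₁ φ) (h₁b : CondIIb n Des₁ φ)
    (h₂i : CondI n Des₂ φ) (h₂b : CondIIb n Des₂ φ)
    (c₀ : C) :
    (∀ c : C, Relation.EqvGen
        (fun a b => ∃ i, 2 ≤ i ∧ i ≤ n - 1 ∧ b = φ i a ∧ φ i a ≠ a) c₀ c →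
        Des₁ c = Des₂ c) ∨
    (∀ c : C, Relation.EqvGen
        (fun a b => ∃ i, 2 ≤ i ∧ i ≤ n - 1 ∧ b = φ i a ∧ φ i a ≠ a) c₀ c →
        Des₂ c = Finset.Ico 1 n \ Des₁ c) := by
  have propagate {c : C} (hc : Relation.EqvGen (IsColoredEdge n φ) c₀ c) :=
    eq_iff_eq_of_eqvGen_isColoredEdge hD₁ hD₂ h₁i h₁b h₂i h₂b hc
  by_cases h₀ : Des₁ c₀ = Des₂ c₀
  · exact Or.inl fun c hc => (propagate hc).mp h₀
  · exact Or.inr fun c hc => h₁i.eq_sdiff_of_ne hD₁ hD₂ h₂i (mt (propagate hc).mpr h₀)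

/-- For a finite set `C` with a descent statistic and involutions
satisfying conditions (i) and (ii.b), the colored edges of a connected component of
the associated graph determine the descent sets of its vertices up to a single global
complementation in `{1,…,n-1}`: two descent statistics compatible with the same
involutions either agree on the whole component or are complementary on the whole
component. -/
theorem descents_determined_up_to_complement
    {C : Type*} [Finite C] (n : ℕ) (Des₁ Des₂ : C → Finset ℕ)
    (hD₁ : ∀ c, Des₁ c ⊆ Finset.Ico 1 n) (hD₂ : ∀ c, Des₂ c ⊆ Finset.Ico 1 n)
    (φ : ℕ → C → C)
    (h₁i : CondI n Des₁ φ) (h₁b : CondIIb n Des₁ φ)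
    (h₂i : CondI n Des₂ φ) (h₂b : CondIIb n Des₂ φ)
    (c₀ : C) :
    (∀ c : C, Relation.EqvGen
        (fun a b => ∃ i, 2 ≤ i ∧ i ≤ n - 1 ∧ b = φ i a ∧ φ i a ≠ a) c₀ c →
        Des₁ c = Des₂ c) ∨
    (∀ c : C, Relation.EqvGen
        (fun a b => ∃ i, 2 ≤ i ∧ i ≤ n - 1 ∧ b = φ i a ∧ φ i a ≠ a) c₀ c →
        Des₂ c = Finset.Ico 1 n \ Des₁ c) :=
  descents_determined_up_to_complement_general n Des₁ Des₂ hD₁ hD₂ φ h₁i h₁b h₂i h₂b c₀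

end
end

section
/- Monk's formula: for any u ∈ S_∞ and positive integer k, one has 𝔖_u · (z_1 + ⋯ + z_k) = Σ 𝔖_{u t_{ij}}, the sum over all transpositions t_{ij} with i ≤ k < j and ℓ(u t_{ij}) = ℓ(u) + 1. -/
open MvPolynomial

noncomputable section

/-!
Let `u` fix every point from `M` on and induct downwards on `ℓ(u)`. If `u` has an ascent at
`m < M - 1`, then `w = u sₘ` is longer, and applying `1 - sₘ` to Monk's formula for `w` gives the
formula for `u`: conjugation by `sₘ` matches the covers of `u` other than `w` with the covers of
`w` that have a descent at `m`, and `eₖ = X₀ + ⋯ + X_{k-1}` is `sₘ`-invariant for `k ≠ m + 1`. The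
remaining case `k = m + 1` follows from the cases `m` and `m + 2` through
`2 e_{m+1} - e_m - e_{m+2} = X_m - X_{m+1}`. Without ascents `u = w₀(M)`, whose covers are the
`w₀(M) t_{iM}`; their Schubert polynomials `𝔖_{w₀(M)} Xᵢ` are computed by descending from
`w₀(M+1)` along simple transpositions, each step a divided difference of a monomial.
-/

open Finset Equiv

def FixesFrom (w : Perm ℕ) (N : ℕ) : Prop := ∀ x, N ≤ x → w x = x

namespace FixesFrom

variable {w v : Perm ℕ} {N : ℕ}

lemma mono (h : FixesFrom w N) {N' : ℕ} (hle : N ≤ N') : FixesFrom w N' :=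
  fun x hx => h x (hle.trans hx)

lemma apply_lt (h : FixesFrom w N) {x : ℕ} (hx : x < N) : w x < N := by
  by_contra! hcon
  have := w.injective (h _ hcon)
  omega

lemma inv (h : FixesFrom w N) : FixesFrom w⁻¹ N :=
  fun x hx => Perm.inv_eq_iff_eq.2 (h x hx).symm

lemma mul (h : FixesFrom w N) (h' : FixesFrom v N) : FixesFrom (w * v) N :=
  fun x hx => by rw [Perm.mul_apply, h' x hx, h x hx]

lemma swap {a b : ℕ} (ha : a < N) (hb : b < N) : FixesFrom (swap a b) N :=
  fun _ hx => swap_apply_of_ne_of_ne (by omega) (by omega)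

lemma mul_swap (h : FixesFrom w N) {a b : ℕ} (ha : a < N) (hb : b < N) :
    FixesFrom (w * Equiv.swap a b) N :=
  h.mul (FixesFrom.swap ha hb)

end FixesFrom

lemma PermFinSupp.exists_fixesFrom {w : Perm ℕ} (hw : PermFinSupp w) : ∃ N, FixesFrom w N := by
  obtain ⟨B, hB⟩ := hw.bddAbove
  exact ⟨B + 1, fun x hx => by_contra fun hne => absurd (hB hne) (by omega)⟩

def inversionsBelow (w : Perm ℕ) (N : ℕ) : Finset (ℕ × ℕ) :=
  {p ∈ range N ×ˢ range N | p.1 < p.2 ∧ w p.2 < w p.1}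

lemma mem_inversionsBelow {w : Perm ℕ} {N : ℕ} {p : ℕ × ℕ} :
    p ∈ inversionsBelow w N ↔ (p.1 < N ∧ p.2 < N) ∧ p.1 < p.2 ∧ w p.2 < w p.1 := by
  rw [inversionsBelow, mem_filter, mem_product, mem_range, mem_range]

section Length

variable {w t : Perm ℕ} {N : ℕ}

lemma permLength_eq_card (hw : FixesFrom w N) : permLength w = #(inversionsBelow w N) := by
  have hmem : ∀ p : ℕ × ℕ, p.1 < p.2 ∧ w p.2 < w p.1 ↔ p ∈ inversionsBelow w N := by
    intro p
    rw [mem_inversionsBelow]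
    refine ⟨fun ⟨hlt, hinv⟩ => ⟨⟨?_, ?_⟩, hlt, hinv⟩, fun h => h.2⟩ <;>
    · by_contra! hge
      have h2 := hw p.2 (by omega)
      rcases lt_or_ge p.1 N with h1 | h1
      · have := hw.apply_lt h1
        omega
      · have := hw p.1 h1
        omega
  rw [permLength, ← Nat.card_eq_finsetCard]
  exact Nat.card_congr (Equiv.subtypeEquivRight hmem)

lemma permLength_le (hw : FixesFrom w N) : permLength w ≤ N * N := by
  rw [permLength_eq_card hw]
  exact (card_filter_le _ _).trans (by simp)

/-- Only the pairs reversed by `t⁻¹` can change their inversion status between `w` and `w * t`: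
those inverted by `w` are lost, the others are gained. -/
lemma permLength_mul_add_card (hw : FixesFrom w N) (ht : FixesFrom t N) :
    permLength (w * t) + #{p ∈ inversionsBelow t⁻¹ N | w p.2 < w p.1}
      = permLength w + #{p ∈ inversionsBelow t⁻¹ N | w p.1 < w p.2} := by
  have hgained : #{p ∈ inversionsBelow t⁻¹ N | w p.1 < w p.2}
      = #{p ∈ range N ×ˢ range N | t⁻¹ p.1 < t⁻¹ p.2 ∧ p.2 < p.1 ∧ w p.2 < w p.1} := by
    refine card_nbij' Prod.swap Prod.swap ?_ ?_ (fun _ _ => rfl) (fun _ _ => rfl) <;>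
    · intro p hp
      simp only [mem_coe, mem_filter, mem_inversionsBelow, mem_product, mem_range, Prod.fst_swap,
        Prod.snd_swap] at hp ⊢
      omega
  have hmul : permLength (w * t)
      = #{p ∈ range N ×ˢ range N | t⁻¹ p.1 < t⁻¹ p.2 ∧ w p.2 < w p.1} := by
    rw [permLength_eq_card (hw.mul ht)]
    refine card_nbij' (Prod.map t t) (Prod.map ⇑t⁻¹ ⇑t⁻¹) ?_ ?_ ?_ ?_
    · intro p hp
      simp only [mem_coe, mem_filter, mem_inversionsBelow, mem_product, mem_range,
        Perm.mul_apply, Prod.map_fst, Prod.map_snd, Perm.coe_inv, symm_apply_apply] at hp ⊢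
      exact ⟨⟨ht.apply_lt hp.1.1, ht.apply_lt hp.1.2⟩, hp.2⟩
    · intro p hp
      simp only [mem_coe, mem_filter, mem_inversionsBelow, mem_product, mem_range,
        Perm.mul_apply, Prod.map_fst, Prod.map_snd, Perm.coe_inv, apply_symm_apply] at hp ⊢
      exact ⟨⟨ht.inv.apply_lt hp.1.1, ht.inv.apply_lt hp.1.2⟩, hp.2⟩
    · intro p _
      simp [Prod.map]
    · intro p _
      simp [Prod.map]
  rw [hmul, hgained, permLength_eq_card hw]
  simp only [inversionsBelow, filter_filter, card_filter, ← sum_add_distrib]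
  refine sum_congr rfl fun p _ => ?_
  have ht' : p.1 ≠ p.2 ↔ t⁻¹ p.1 ≠ t⁻¹ p.2 := t⁻¹.injective.ne_iff.symm
  have hw' : p.1 ≠ p.2 ↔ w p.1 ≠ w p.2 := w.injective.ne_iff.symm
  split_ifs <;> omega

lemma inversionsBelow_swap {a b : ℕ} (hab : a < b) (hb : b < N) :
    inversionsBelow (swap a b) N
      = insert (a, b) ((Ioo a b).image (fun c => (a, c)) ∪ (Ioo a b).image (fun c => (c, b))) := by
  ext ⟨x, y⟩
  simp only [mem_inversionsBelow, mem_insert, mem_union, mem_image, mem_Ioo, Prod.mk.injEq,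
    swap_apply_def]
  constructor
  · rintro ⟨⟨hx, hy⟩, hxy, hinv⟩
    split_ifs at hinv <;> first
      | exact Or.inl ⟨by omega, by omega⟩
      | exact Or.inr (Or.inl ⟨y, ⟨by omega, by omega⟩, by omega, rfl⟩)
      | exact Or.inr (Or.inr ⟨x, ⟨by omega, by omega⟩, rfl, by omega⟩)
  · rintro (⟨rfl, rfl⟩ | ⟨c, hc, rfl, rfl⟩ | ⟨c, hc, rfl, rfl⟩) <;>
    · refine ⟨⟨by omega, by omega⟩, by omega, ?_⟩
      split_ifs <;> omega

lemma sum_inversionsBelow_swap {M : Type*} [AddCommMonoid M] (f : ℕ × ℕ → M) {a b : ℕ}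
    (hab : a < b) (hb : b < N) :
    ∑ p ∈ inversionsBelow (swap a b) N, f p = f (a, b) + ∑ c ∈ Ioo a b, (f (a, c) + f (c, b)) := by
  rw [inversionsBelow_swap hab hb, sum_insert, sum_union, sum_image, sum_image, sum_add_distrib]
  · exact fun c _ d _ h => (Prod.mk.inj h).1
  · exact fun c _ d _ h => (Prod.mk.inj h).2
  · refine disjoint_left.2 ?_
    simp only [mem_image, mem_Ioo, not_exists, not_and]
    rintro _ ⟨c, hc, rfl⟩ d _ h
    simp only [Prod.mk.injEq] at h
    omega
  · simp only [mem_union, mem_image, mem_Ioo, Prod.mk.injEq, not_or, not_exists, not_and]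
    constructor <;> intros <;> omega

end Length

section SwapLength

variable {w : Perm ℕ} {N a b : ℕ}

lemma permLength_mul_swap_of_lt (hw : FixesFrom w N) (hab : a < b) (hlt : w a < w b) :
    permLength (w * swap a b)
      = permLength w + 1 + 2 * #{c ∈ Ioo a b | w a < w c ∧ w c < w b} := by
  have key := permLength_mul_add_card (hw.mono (le_max_left N (b + 1)))
    (FixesFrom.swap (N := max N (b + 1)) (a := a) (b := b) (by omega) (by omega))
  rw [swap_inv, card_filter, card_filter, sum_inversionsBelow_swap _ hab (by omega),
    sum_inversionsBelow_swap _ hab (by omega)] at key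
  have hpt : ∀ c ∈ Ioo a b,
      ((if w a < w c then 1 else 0) + if w c < w b then 1 else 0)
        = ((if w c < w a then 1 else 0) + if w b < w c then 1 else 0)
          + 2 * if w a < w c ∧ w c < w b then 1 else 0 := by
    intro c hc
    rw [mem_Ioo] at hc
    have := w.injective.ne_iff (x := c) (y := a)
    have := w.injective.ne_iff (x := c) (y := b)
    split_ifs <;> omega
  simp only [sum_congr rfl hpt, sum_add_distrib, ← mul_sum, if_neg (lt_asymm hlt), if_pos hlt]
    at key
  rw [card_filter]
  omega

lemma permLength_mul_swap_eq_add_one_iff (hw : FixesFrom w N) (hab : a < b) :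
    permLength (w * swap a b) = permLength w + 1
      ↔ w a < w b ∧ ∀ c ∈ Ioo a b, ¬(w a < w c ∧ w c < w b) := by
  rcases lt_trichotomy (w a) (w b) with hlt | heq | hgt
  · rw [permLength_mul_swap_of_lt hw hab hlt, ← filter_eq_empty_iff, ← card_eq_zero]
    omega
  · exact absurd (w.injective heq) hab.ne
  · have hlt : (w * swap a b) a < (w * swap a b) b := by simpa using hgt
    have hw' := (hw.mono (le_max_left N (b + 1))).mul_swap (a := a) (b := b) (by omega) (by omega)
    have := permLength_mul_swap_of_lt hw' hab hlt
    rw [mul_swap_mul_self] at this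
    omega

lemma permLength_mul_swap_succ (hw : FixesFrom w N) {m : ℕ} (h : w m < w (m + 1)) :
    permLength (w * swap m (m + 1)) = permLength w + 1 := by
  rw [permLength_mul_swap_eq_add_one_iff hw m.lt_succ_self]
  simp [h]

end SwapLength

section Polynomials

def sumX (k : ℕ) : MvPolynomial ℕ ℤ := ∑ i ∈ range k, X i

lemma rename_swap_rename_swap (a b : ℕ) (f : MvPolynomial ℕ ℤ) :
    rename (swap a b) (rename (swap a b) f) = f := by
  rw [rename_rename, show (swap a b : ℕ → ℕ) ∘ swap a b = id from funext (swap_apply_self a b),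
    rename_id_apply]

lemma X_sub_X_ne_zero {i j : ℕ} (h : i ≠ j) : (X i - X j : MvPolynomial ℕ ℤ) ≠ 0 :=
  sub_ne_zero.2 (X_injective.ne h)

variable {m k : ℕ}

lemma rename_swap_sumX_of_ne (hk : k ≠ m + 1) : rename (swap m (m + 1)) (sumX k) = sumX k := by
  rw [sumX, map_sum]
  simp_rw [rename_X]
  refine sum_equiv (swap m (m + 1)) (fun i => ?_) (fun _ _ => rfl)
  simp only [mem_range, swap_apply_def]
  split_ifs <;> omega

lemma rename_swap_sumX_succ :
    rename (swap m (m + 1)) (sumX (m + 1)) = sumX (m + 1) - (X m - X (m + 1)) := by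
  rw [sumX, sum_range_succ, map_add, ← sumX, rename_swap_sumX_of_ne (by omega), rename_X,
    swap_apply_left]
  ring

end Polynomials

namespace IsSchubertFamily

variable {S : Perm ℕ → MvPolynomial ℕ ℤ} {v : Perm ℕ} {m : ℕ}

lemma sub_rename (hS : IsSchubertFamily S)
    (h : permLength (v * swap m (m + 1)) = permLength v + 1) :
    S (v * swap m (m + 1)) - rename (swap m (m + 1)) (S (v * swap m (m + 1)))
      = (X m - X (m + 1)) * S v := by
  have := hS.2 (v * swap m (m + 1)) m
  rw [mul_swap_mul_self] at this
  exact (this h).symm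

/-- Applying `sₘ` to the recursion turns it into `(Xₘ - Xₘ₊₁) (sₘ 𝔖_v - 𝔖_v) = 0`. -/
lemma rename_eq_self (hS : IsSchubertFamily S)
    (h : permLength (v * swap m (m + 1)) = permLength v + 1) :
    rename (swap m (m + 1)) (S v) = S v := by
  have hrec := hS.sub_rename h
  have hσ := congrArg (rename (swap m (m + 1))) hrec
  rw [map_sub, rename_swap_rename_swap, map_mul, map_sub, rename_X, rename_X, swap_apply_left,
    swap_apply_right] at hσ
  refine mul_left_cancel₀ (X_sub_X_ne_zero (Nat.ne_add_one m)) ?_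
  linear_combination hσ + hrec

end IsSchubertFamily

section ConjPair

def conjPair (g : Perm ℕ) (p : ℕ × ℕ) : ℕ × ℕ := (min (g p.1) (g p.2), max (g p.1) (g p.2))

variable {p : ℕ × ℕ}

lemma swap_conjPair (g : Perm ℕ) (p : ℕ × ℕ) :
    swap (conjPair g p).1 (conjPair g p).2 = g * swap p.1 p.2 * g⁻¹ := by
  rw [conjPair, ← swap_apply_apply]
  rcases le_total (g p.1) (g p.2) with h | h
  · rw [min_eq_left h, max_eq_right h]
  · rw [min_eq_right h, max_eq_left h, swap_comm]

lemma conjPair_fst_lt_snd (g : Perm ℕ) (hp : p.1 < p.2) : (conjPair g p).1 < (conjPair g p).2 :=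
  min_lt_max.2 (g.injective.ne hp.ne)

lemma conjPair_swap_conjPair_swap (a b : ℕ) (hp : p.1 < p.2) :
    conjPair (swap a b) (conjPair (swap a b) p) = p := by
  rcases le_total (swap a b p.1) (swap a b p.2) with h | h <;>
  simp [conjPair, h, hp.le]

variable {m k : ℕ}

lemma conjPair_swap_window_iff (hp : p.1 < p.2) (hk : k ≠ m + 1) :
    ((conjPair (swap m (m + 1)) p).1 < k ∧ k ≤ (conjPair (swap m (m + 1)) p).2)
      ↔ (p.1 < k ∧ k ≤ p.2) := by
  simp only [conjPair, swap_apply_def]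
  split_ifs <;> omega

lemma conjPair_swap_lt_le_iff {N : ℕ} (hm : m + 1 < N) (hp : p.1 < p.2) :
    ((conjPair (swap m (m + 1)) p).1 < N ∧ (conjPair (swap m (m + 1)) p).2 ≤ N)
      ↔ (p.1 < N ∧ p.2 ≤ N) := by
  simp only [conjPair, swap_apply_def]
  split_ifs <;> omega

lemma sum_filter_window_add_sum_filter_window {R : Type*} [AddCommMonoid R] (f : ℕ × ℕ → R)
    {E : Finset (ℕ × ℕ)} (hE : ∀ p ∈ E, p.1 < p.2 ∧ p ≠ (m, m + 1)) :
    ∑ p ∈ E with p.1 < m ∧ m ≤ p.2, f p + ∑ p ∈ E with p.1 < m + 2 ∧ m + 2 ≤ p.2, f p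
      = ∑ p ∈ E with p.1 < m + 1 ∧ m + 1 ≤ p.2, f p
        + ∑ p ∈ E with (conjPair (swap m (m + 1)) p).1 < m + 1
            ∧ m + 1 ≤ (conjPair (swap m (m + 1)) p).2, f p := by
  simp only [sum_filter, ← sum_add_distrib]
  refine sum_congr rfl fun p hp => ?_
  obtain ⟨hlt, hne⟩ := hE p hp
  have hne' : ¬(p.1 = m ∧ p.2 = m + 1) := fun h => hne (Prod.ext h.1 h.2)
  simp only [conjPair, swap_apply_def]
  split_ifs <;> first | omega | simp

end ConjPair

section Covers

/-- When `u` fixes every point from `N` on, this contains every cover `u * swap a b` of `u`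
with `a < k ≤ b` for some `k ≤ N`. -/
def coversBelow (u : Perm ℕ) (N : ℕ) : Finset (ℕ × ℕ) :=
  {p ∈ range N ×ˢ range (N + 1) | p.1 < p.2 ∧ permLength (u * swap p.1 p.2) = permLength u + 1}

variable {u : Perm ℕ} {N k : ℕ} {p : ℕ × ℕ}

lemma mem_coversBelow : p ∈ coversBelow u N
    ↔ (p.1 < N ∧ p.2 ≤ N) ∧ p.1 < p.2 ∧ permLength (u * swap p.1 p.2) = permLength u + 1 := by
  rw [coversBelow, mem_filter, mem_product, mem_range, mem_range, Nat.lt_succ_iff]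

lemma fst_lt_snd_of_mem_coversBelow (hp : p ∈ coversBelow u N) : p.1 < p.2 :=
  (mem_coversBelow.1 hp).2.1

lemma snd_le_of_permLength_mul_swap (hu : FixesFrom u N) {a b : ℕ} (hab : a < b) (ha : a < N)
    (hcov : permLength (u * swap a b) = permLength u + 1) : b ≤ N := by
  by_contra! hb
  have hmid := ((permLength_mul_swap_eq_add_one_iff hu hab).1 hcov).2 N (mem_Ioo.2 ⟨ha, hb⟩)
  rw [hu N le_rfl, hu b hb.le] at hmid
  exact hmid ⟨hu.apply_lt ha, hb⟩

lemma setOf_covers_eq_coe_filter (hu : FixesFrom u N) (hk : k ≤ N) :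
    {p : ℕ × ℕ | p.1 < k ∧ k ≤ p.2 ∧ permLength (u * swap p.1 p.2) = permLength u + 1}
      = ↑{p ∈ coversBelow u N | p.1 < k ∧ k ≤ p.2} := by
  ext p
  simp only [Set.mem_ofPred_eq, coe_filter, mem_coversBelow]
  refine ⟨fun ⟨h1, h2, h3⟩ => ⟨⟨⟨by omega, ?_⟩, by omega, h3⟩, h1, h2⟩,
    fun ⟨⟨_, _, h3⟩, h1, h2⟩ => ⟨h1, h2, h3⟩⟩
  exact snd_le_of_permLength_mul_swap hu (by omega) (by omega) h3

end Covers

def MonkHolds (S : Perm ℕ → MvPolynomial ℕ ℤ) (u : Perm ℕ) (N k : ℕ) : Prop :=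
  S u * sumX k = ∑ p ∈ coversBelow u N with p.1 < k ∧ k ≤ p.2, S (u * swap p.1 p.2)

section Step

variable {S : Perm ℕ → MvPolynomial ℕ ℤ} {u : Perm ℕ} {M m k : ℕ}

lemma mul_swap_apply_lt_of_permLength (hu : FixesFrom u M) (hasc : u m < u (m + 1))
    {q : ℕ × ℕ} (hq : q.1 < q.2) (hqm : q ≠ (m, m + 1))
    (hcov : permLength (u * swap q.1 q.2) = permLength u + 1) :
    (u * swap q.1 q.2) m < (u * swap q.1 q.2) (m + 1) := by
  obtain ⟨a, b⟩ := q
  obtain ⟨hlt, hmid⟩ := (permLength_mul_swap_eq_add_one_iff hu hq).1 hcov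
  have hmid₀ : a < m → m < b → ¬(u a < u m ∧ u m < u b) := fun h1 h2 => hmid m (mem_Ioo.2 ⟨h1, h2⟩)
  have hmid₁ : a < m + 1 → m + 1 < b → ¬(u a < u (m + 1) ∧ u (m + 1) < u b) :=
    fun h1 h2 => hmid (m + 1) (mem_Ioo.2 ⟨h1, h2⟩)
  have hqm' : ¬(a = m ∧ b = m + 1) := fun h => hqm (Prod.ext h.1 h.2)
  have := u.injective.ne_iff (x := m) (y := a)
  have := u.injective.ne_iff (x := m) (y := b)
  have := u.injective.ne_iff (x := m + 1) (y := a)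
  have := u.injective.ne_iff (x := m + 1) (y := b)
  simp only [Perm.mul_apply, swap_apply_def] at hq hlt ⊢
  split_ifs <;> omega

lemma mul_swap_mul_swap_conjPair (u : Perm ℕ) (q : ℕ × ℕ) :
    u * swap m (m + 1) * swap (conjPair (swap m (m + 1)) q).1 (conjPair (swap m (m + 1)) q).2
      = u * swap q.1 q.2 * swap m (m + 1) := by
  rw [swap_conjPair, swap_inv]
  simp only [mul_assoc, swap_mul_self_mul]

lemma mem_coversBelow_iff_conjPair (hu : FixesFrom u M) (hm : m + 1 < M)
    (hasc : u m < u (m + 1)) {q : ℕ × ℕ} (hq : q.1 < q.2) (hqm : q ≠ (m, m + 1)) :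
    q ∈ coversBelow u M ↔
      conjPair (swap m (m + 1)) q ∈ coversBelow (u * swap m (m + 1)) M ∧
        (u * swap q.1 q.2 * swap m (m + 1)) (m + 1) < (u * swap q.1 q.2 * swap m (m + 1)) m := by
  have hfix : FixesFrom (u * swap q.1 q.2) (max M (q.2 + 1)) :=
    (hu.mono (le_max_left _ _)).mul_swap (by omega) (by omega)
  have hlenw := permLength_mul_swap_succ hu hasc
  rw [mem_coversBelow, mem_coversBelow, mul_swap_mul_swap_conjPair,
    conjPair_swap_lt_le_iff hm hq]
  simp only [Perm.mul_apply (u * swap q.1 q.2), swap_apply_left, swap_apply_right]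
  constructor
  · rintro ⟨hbox, -, hcov⟩
    have hasc' := mul_swap_apply_lt_of_permLength hu hasc hq hqm hcov
    refine ⟨⟨hbox, conjPair_fst_lt_snd _ hq, ?_⟩, hasc'⟩
    rw [permLength_mul_swap_succ hfix hasc', hcov, hlenw]
  · rintro ⟨⟨hbox, -, hcov⟩, hasc'⟩
    rw [permLength_mul_swap_succ hfix hasc', hlenw] at hcov
    exact ⟨hbox, hq, by omega⟩

/-- Apply `1 - sₘ` to Monk's formula for `w = u sₘ`: a term `𝔖_{w t_r}` survives only when
`w t_r` has a descent at `m`, and then it is `(Xₘ - Xₘ₊₁) 𝔖_{u t_q}` for `t_q = sₘ t_r sₘ`. -/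
lemma sub_rename_mul_sumX (hS : IsSchubertFamily S) (hu : FixesFrom u M) (hm : m + 1 < M)
    (hasc : u m < u (m + 1)) {j : ℕ} (hw : MonkHolds S (u * swap m (m + 1)) M j) :
    S (u * swap m (m + 1)) * sumX j - rename (swap m (m + 1)) (S (u * swap m (m + 1)) * sumX j)
      = (X m - X (m + 1)) * ∑ q ∈ (coversBelow u M).erase (m, m + 1) with
          (conjPair (swap m (m + 1)) q).1 < j ∧ j ≤ (conjPair (swap m (m + 1)) q).2,
          S (u * swap q.1 q.2) := by
  set s := swap m (m + 1)
  set w := u * s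
  rw [hw, map_sum, ← sum_sub_distrib, mul_sum,
    ← sum_filter_of_ne (p := fun r => (w * swap r.1 r.2) (m + 1) < (w * swap r.1 r.2) m)]
  · symm
    refine sum_nbij' (conjPair s) (conjPair s) ?_ ?_ ?_ ?_ ?_
    · intro q hq
      simp only [mem_filter, mem_erase] at hq ⊢
      obtain ⟨⟨hqm, hqC⟩, hwin⟩ := hq
      obtain ⟨hrC, hdesc⟩ :=
        (mem_coversBelow_iff_conjPair hu hm hasc (fst_lt_snd_of_mem_coversBelow hqC) hqm).1 hqC
      rw [mul_swap_mul_swap_conjPair]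
      exact ⟨⟨hrC, hwin⟩, hdesc⟩
    · intro r hr
      simp only [mem_filter, mem_erase] at hr ⊢
      obtain ⟨⟨hrC, hwin⟩, hdesc⟩ := hr
      have hr := fst_lt_snd_of_mem_coversBelow hrC
      have hcr := conjPair_swap_conjPair_swap m (m + 1) hr
      have hne : conjPair s r ≠ (m, m + 1) := by
        intro h
        have hrm : r = (m, m + 1) := by
          rw [← hcr, h]
          simp [conjPair]
        rw [hrm, mul_swap_mul_self] at hdesc
        omega
      have hiff := mem_coversBelow_iff_conjPair hu hm hasc (conjPair_fst_lt_snd s hr) hne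
      rw [hcr, ← mul_swap_mul_swap_conjPair, hcr] at hiff
      exact ⟨⟨hne, hiff.2 ⟨hrC, hdesc⟩⟩, by rwa [hcr]⟩
    · intro q hq
      exact conjPair_swap_conjPair_swap m (m + 1)
        (fst_lt_snd_of_mem_coversBelow (mem_erase.1 (mem_filter.1 hq).1).2)
    · intro r hr
      exact conjPair_swap_conjPair_swap m (m + 1)
        (fst_lt_snd_of_mem_coversBelow (mem_filter.1 (mem_filter.1 hr).1).1)
    · intro q hq
      simp only [mem_filter, mem_erase] at hq
      obtain ⟨⟨hqm, hqC⟩, -⟩ := hq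
      obtain ⟨hbox, hq, hcov⟩ := mem_coversBelow.1 hqC
      rw [mul_swap_mul_swap_conjPair, hS.sub_rename]
      exact permLength_mul_swap_succ ((hu.mono (le_max_left M (q.2 + 1))).mul_swap
        (by omega) (by omega)) (mul_swap_apply_lt_of_permLength hu hasc hq hqm hcov)
  · intro r hr hne
    obtain ⟨hbox, hr, -⟩ := mem_coversBelow.1 (mem_filter.1 hr).1
    by_contra! hasc'
    have hfix : FixesFrom (w * swap r.1 r.2) (M + 1) :=
      ((hu.mono M.le_succ).mul_swap (by omega) (by omega)).mul_swap (by omega) (by omega)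
    have hne' : (w * swap r.1 r.2) m ≠ (w * swap r.1 r.2) (m + 1) :=
      (w * swap r.1 r.2).injective.ne (Nat.ne_add_one m)
    exact hne (sub_eq_zero.2
      (hS.rename_eq_self (m := m) (permLength_mul_swap_succ hfix (by omega))).symm)

lemma filter_window_coversBelow_of_ne (hk : k ≠ m + 1) :
    {p ∈ coversBelow u M | p.1 < k ∧ k ≤ p.2}
      = {q ∈ (coversBelow u M).erase (m, m + 1) |
          (conjPair (swap m (m + 1)) q).1 < k ∧ k ≤ (conjPair (swap m (m + 1)) q).2} := by
  ext q
  simp only [mem_filter, mem_erase]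
  constructor
  · rintro ⟨hq, hwin⟩
    refine ⟨⟨by rintro rfl; omega, hq⟩, ?_⟩
    rwa [conjPair_swap_window_iff (fst_lt_snd_of_mem_coversBelow hq) hk]
  · rintro ⟨⟨-, hq⟩, hwin⟩
    exact ⟨hq, (conjPair_swap_window_iff (fst_lt_snd_of_mem_coversBelow hq) hk).1 hwin⟩

lemma MonkHolds.of_mul_swap_of_ne (hS : IsSchubertFamily S) (hu : FixesFrom u M)
    (hm : m + 1 < M) (hasc : u m < u (m + 1)) (hk : k ≠ m + 1)
    (hw : MonkHolds S (u * swap m (m + 1)) M k) : MonkHolds S u M k := by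
  have h := sub_rename_mul_sumX hS hu hm hasc hw
  rw [map_mul, rename_swap_sumX_of_ne hk, ← sub_mul,
    hS.sub_rename (permLength_mul_swap_succ hu hasc), mul_assoc,
    ← filter_window_coversBelow_of_ne hk] at h
  exact mul_left_cancel₀ (X_sub_X_ne_zero (Nat.ne_add_one m)) h

lemma MonkHolds.of_mul_swap_succ (hS : IsSchubertFamily S) (hu : FixesFrom u M)
    (hm : m + 1 < M) (hasc : u m < u (m + 1)) (h₀ : MonkHolds S u M m)
    (h₂ : MonkHolds S u M (m + 2)) (hw : MonkHolds S (u * swap m (m + 1)) M (m + 1)) :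
    MonkHolds S u M (m + 1) := by
  set E := (coversBelow u M).erase (m, m + 1)
  have hlenw := permLength_mul_swap_succ hu hasc
  have hmC : (m, m + 1) ∈ {p ∈ coversBelow u M | p.1 < m + 1 ∧ m + 1 ≤ p.2} :=
    mem_filter.2 ⟨mem_coversBelow.2 ⟨⟨by omega, by omega⟩, by omega, hlenw⟩, by omega, le_rfl⟩
  have hE : ∀ p ∈ E, p.1 < p.2 ∧ p ≠ (m, m + 1) := fun p hp =>
    ⟨fst_lt_snd_of_mem_coversBelow (mem_erase.1 hp).2, (mem_erase.1 hp).1⟩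
  have hsum := sum_filter_window_add_sum_filter_window (fun q => S (u * swap q.1 q.2)) hE
  have hΔ := sub_rename_mul_sumX hS hu hm hasc hw
  rw [map_mul, rename_swap_sumX_succ] at hΔ
  have hrec := hS.sub_rename hlenw
  have hE₀ : {p ∈ E | p.1 < m ∧ m ≤ p.2} = {p ∈ coversBelow u M | p.1 < m ∧ m ≤ p.2} := by
    rw [filter_erase, erase_eq_of_notMem (by simp)]
  have hE₂ : {p ∈ E | p.1 < m + 2 ∧ m + 2 ≤ p.2}
      = {p ∈ coversBelow u M | p.1 < m + 2 ∧ m + 2 ≤ p.2} := by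
    rw [filter_erase, erase_eq_of_notMem (by simp)]
  rw [MonkHolds, ← hE₀] at h₀
  rw [MonkHolds, ← hE₂] at h₂
  rw [MonkHolds, ← add_sum_erase _ _ hmC, ← filter_erase]
  dsimp only
  have hT : (∑ q ∈ E with (conjPair (swap m (m + 1)) q).1 < m + 1
      ∧ m + 1 ≤ (conjPair (swap m (m + 1)) q).2, S (u * swap q.1 q.2))
      = S u * sumX (m + 1) + S (u * swap m (m + 1)) - (X m - X (m + 1)) * S u := by
    refine mul_left_cancel₀ (X_sub_X_ne_zero (Nat.ne_add_one m)) ?_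
    linear_combination -hΔ + (sumX (m + 1) - (X m - X (m + 1))) * hrec
  have he₁ : sumX (m + 1) = sumX m + X m := sum_range_succ _ _
  have he₂ : sumX (m + 2) = sumX (m + 1) + X (m + 1) := sum_range_succ _ _
  linear_combination h₀ + h₂ + hsum + hT + S u * he₁ - S u * he₂

end Step

section LongestElement

variable {S : Perm ℕ → MvPolynomial ℕ ℤ} {M i : ℕ}

lemma w0_apply (n x : ℕ) : w0 n x = if x < n then n - 1 - x else x := rfl

lemma fixesFrom_w0 (n : ℕ) : FixesFrom (w0 n) n :=
  fun x hx => by rw [w0_apply, if_neg (by omega)]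

def monomialProd (n : ℕ) (α : ℕ → ℕ) : MvPolynomial ℕ ℤ := ∏ l ∈ range n, X l ^ α l

lemma rename_swap_monomialProd {n j : ℕ} (hj : j + 1 < n) (α : ℕ → ℕ) :
    rename (swap j (j + 1)) (monomialProd n α) = monomialProd n (α ∘ swap j (j + 1)) := by
  rw [monomialProd, map_prod]
  simp_rw [map_pow, rename_X]
  refine prod_equiv (swap j (j + 1)) (fun l => ?_) (fun l _ => by simp)
  simp only [mem_range, swap_apply_def]
  split_ifs <;> omega

lemma monomialProd_sub_rename_swap {n j : ℕ} (hj : j + 1 < n) {α : ℕ → ℕ}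
    (hα : α j = α (j + 1) + 1) :
    monomialProd n α - rename (swap j (j + 1)) (monomialProd n α)
      = (X j - X (j + 1)) * monomialProd n (Function.update α j (α (j + 1))) := by
  rw [rename_swap_monomialProd hj]
  have hsplit : ∀ β : ℕ → ℕ, monomialProd n β
      = X j ^ β j * X (j + 1) ^ β (j + 1) * ∏ l ∈ ((range n).erase j).erase (j + 1), X l ^ β l := by
    intro β
    rw [monomialProd, ← mul_prod_erase _ _ (mem_range.2 (by omega : j < n)),
      ← mul_prod_erase _ _ (mem_erase.2 ⟨by omega, mem_range.2 hj⟩), mul_assoc]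
  have hrest : ∀ β : ℕ → ℕ, (∀ l, l ≠ j → l ≠ j + 1 → β l = α l) →
      ∏ l ∈ ((range n).erase j).erase (j + 1), X l ^ β l
        = ∏ l ∈ ((range n).erase j).erase (j + 1), (X l : MvPolynomial ℕ ℤ) ^ α l := by
    refine fun β hβ => prod_congr rfl fun l hl => ?_
    obtain ⟨hl1, hl0⟩ := mem_erase.1 hl
    rw [hβ l (mem_erase.1 hl0).1 hl1]
  rw [hsplit α, hsplit, hsplit,
    hrest (α ∘ swap j (j + 1)) (fun l h0 h1 => by simp [swap_apply_of_ne_of_ne h0 h1]),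
    hrest (Function.update α j (α (j + 1))) (fun l h0 _ => Function.update_of_ne h0 _ _)]
  simp only [Function.comp_apply, swap_apply_left, swap_apply_right, Function.update_self,
    Function.update_of_ne (show j + 1 ≠ j by omega), hα, pow_succ]
  ring

/-- Position of the `r`-th simple transposition in the chain from `w0 (M + 1)` down to
`w0 M * swap i M`: first `0, …, i - 1` (moving the value `M` to position `i`), then
`i + 1, …, M - 1` (moving the value `M - 1 - i` to position `M`). -/
def monkChainPos (i r : ℕ) : ℕ := if r < i then r else r + 1

def monkChain (M i : ℕ) : ℕ → Perm ℕ
  | 0 => w0 (M + 1)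
  | r + 1 => monkChain M i r * swap (monkChainPos i r) (monkChainPos i r + 1)

set_option maxHeartbeats 1600000 in
lemma monkChain_apply (hi : i < M) {r : ℕ} (hr : r ≤ M - 1) (x : ℕ) :
    monkChain M i r x =
      if r ≤ i then
        (if x < r then M - 1 - x else if x = r then M else if x ≤ M then M - x else x)
      else
        (if x = i then M else if x ≤ r then M - 1 - x
          else if x = r + 1 then M - i - 1 else if x ≤ M then M - x else x) := by
  induction r generalizing x with
  | zero =>
    rw [monkChain, w0_apply]
    split_ifs <;> omega
  | succ r ih =>
    rw [monkChain, Perm.mul_apply, monkChainPos]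
    rcases Nat.lt_or_ge r i with hri | hri
    · rw [if_pos hri]
      rcases eq_or_ne x r with rfl | hx₀
      · rw [swap_apply_left, ih (by omega)]
        split_ifs <;> omega
      rcases eq_or_ne x (r + 1) with rfl | hx₁
      · rw [swap_apply_right, ih (by omega)]
        split_ifs <;> omega
      · rw [swap_apply_of_ne_of_ne hx₀ hx₁, ih (by omega)]
        split_ifs <;> omega
    · rw [if_neg (by omega)]
      rcases eq_or_ne x (r + 1) with rfl | hx₀
      · rw [swap_apply_left, ih (by omega)]
        split_ifs <;> omega
      rcases eq_or_ne x (r + 2) with rfl | hx₁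
      · rw [swap_apply_right, ih (by omega)]
        split_ifs <;> omega
      · rw [swap_apply_of_ne_of_ne hx₀ hx₁, ih (by omega)]
        split_ifs <;> omega

def monkChainExp (M i r l : ℕ) : ℕ := M - l - if l < monkChainPos i r ∧ l ≠ i then 1 else 0

lemma fixesFrom_monkChain (hi : i < M) {r : ℕ} (hr : r ≤ M - 1) :
    FixesFrom (monkChain M i r) (M + 1) := by
  intro x hx
  rw [monkChain_apply hi hr]
  split_ifs <;> omega

lemma IsSchubertFamily.apply_monkChain (hS : IsSchubertFamily S) (hi : i < M) {r : ℕ}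
    (hr : r ≤ M - 1) : S (monkChain M i r) = monomialProd (M + 1) (monkChainExp M i r) := by
  induction r with
  | zero =>
    rw [monkChain, hS.1, monomialProd]
    refine prod_congr rfl fun l _ => ?_
    congr 1
    simp only [monkChainExp, monkChainPos]
    split_ifs <;> omega
  | succ r ih =>
    set j := monkChainPos i r with hj
    have hjM : j + 1 < M + 1 := by simp only [hj, monkChainPos]; split_ifs <;> omega
    have hdesc : monkChain M i r (j + 1) < monkChain M i r j := by
      rw [monkChain_apply hi (by omega), monkChain_apply hi (by omega), hj, monkChainPos]
      split_ifs <;> omega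
    have hα : monkChainExp M i r j = monkChainExp M i r (j + 1) + 1 := by
      simp only [monkChainExp, hj, monkChainPos]
      split_ifs <;> omega
    have hexp : Function.update (monkChainExp M i r) j (monkChainExp M i r (j + 1))
        = monkChainExp M i (r + 1) := by
      funext l
      simp only [Function.update_apply, monkChainExp, hj, monkChainPos]
      split_ifs <;> omega
    have hfix : FixesFrom (monkChain M i r * swap j (j + 1)) (M + 1) :=
      (fixesFrom_monkChain hi (by omega)).mul_swap (by omega) hjM
    have hrec := hS.sub_rename (permLength_mul_swap_succ (m := j) hfix (by simpa using hdesc))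
    rw [mul_swap_mul_self, ih (by omega), monomialProd_sub_rename_swap hjM hα, hexp] at hrec
    rw [monkChain, ← hj]
    exact mul_left_cancel₀ (X_sub_X_ne_zero (Nat.ne_add_one j)) hrec.symm

lemma monkChain_last (hi : i < M) : monkChain M i (M - 1) = w0 M * swap i M := by
  ext x
  rw [monkChain_apply hi le_rfl, Perm.mul_apply, w0_apply, swap_apply_def]
  split_ifs <;> omega

lemma monomialProd_monkChainExp_last (hi : i < M) :
    monomialProd (M + 1) (monkChainExp M i (M - 1))
      = (∏ l ∈ range M, (X l : MvPolynomial ℕ ℤ) ^ (M - 1 - l)) * X i := by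
  have hXi : (X i : MvPolynomial ℕ ℤ) = ∏ l ∈ range M, if l = i then X l else 1 := by
    simp [prod_ite_eq', hi]
  rw [monomialProd, prod_range_succ, hXi, ← prod_mul_distrib]
  have hlast : monkChainExp M i (M - 1) M = 0 := by
    simp only [monkChainExp, monkChainPos]
    split_ifs <;> omega
  rw [hlast, pow_zero, mul_one]
  refine prod_congr rfl fun l hl => ?_
  rw [mem_range] at hl
  by_cases hli : l = i
  · subst hli
    rw [if_pos rfl, ← pow_succ]
    congr 1
    simp only [monkChainExp, monkChainPos]
    split_ifs <;> omega
  · rw [if_neg hli, mul_one]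
    congr 1
    simp only [monkChainExp, monkChainPos]
    split_ifs <;> omega

lemma IsSchubertFamily.apply_w0_mul_swap (hS : IsSchubertFamily S) (hi : i < M) :
    S (w0 M * swap i M) = S (w0 M) * X i := by
  rw [← monkChain_last hi, hS.apply_monkChain hi le_rfl, monomialProd_monkChainExp_last hi, hS.1]

lemma coversBelow_w0_filter {k : ℕ} (hk : k ≤ M) :
    {p ∈ coversBelow (w0 M) M | p.1 < k ∧ k ≤ p.2} = (range k).image (fun i => (i, M)) := by
  ext ⟨a, b⟩
  simp only [mem_filter, mem_coversBelow, mem_image, mem_range, Prod.mk.injEq]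
  constructor
  · rintro ⟨⟨⟨ha, hb⟩, hab, hcov⟩, hak, -⟩
    refine ⟨a, hak, rfl, ?_⟩
    have hlt := ((permLength_mul_swap_eq_add_one_iff (fixesFrom_w0 M) hab).1 hcov).1
    by_contra hbM
    rw [w0_apply, w0_apply, if_pos ha, if_pos (by omega)] at hlt
    omega
  · rintro ⟨a, ha, rfl, rfl⟩
    refine ⟨⟨⟨by omega, le_rfl⟩, by omega, ?_⟩, ha, hk⟩
    refine (permLength_mul_swap_eq_add_one_iff (fixesFrom_w0 M) (by omega)).2 ⟨?_, fun c hc => ?_⟩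
    · rw [w0_apply, w0_apply, if_pos (by omega), if_neg (lt_irrefl M)]
      omega
    · rw [mem_Ioo] at hc
      rw [w0_apply, w0_apply, w0_apply, if_pos (by omega), if_pos hc.2, if_neg (lt_irrefl M)]
      omega

lemma IsSchubertFamily.monkHolds_w0 (hS : IsSchubertFamily S) {k : ℕ} (hk : k ≤ M) :
    MonkHolds S (w0 M) M k := by
  rw [MonkHolds, coversBelow_w0_filter hk, sum_image (fun _ _ _ _ h => (Prod.mk.inj h).1),
    sum_congr rfl fun i hi => hS.apply_w0_mul_swap ((mem_range.1 hi).trans_le hk), ← mul_sum,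
    sumX]

end LongestElement

lemma eq_w0_of_forall_not_lt {u : Perm ℕ} {M : ℕ} (hu : FixesFrom u M)
    (h : ∀ m, m + 1 < M → ¬u m < u (m + 1)) : u = w0 M := by
  have hdesc : ∀ m, m + 1 < M → u (m + 1) < u m := fun m hm =>
    lt_of_le_of_ne (not_lt.1 (h m hm)) (u.injective.ne (Nat.succ_ne_self m))
  have hgap : ∀ d a, a + d < M → u (a + d) + d ≤ u a := by
    intro d
    induction d with
    | zero => simp
    | succ d ih =>
      intro a ha
      have h₁ := ih (a + 1) (by omega)
      have h₂ := hdesc a (by omega)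
      rw [show a + 1 + d = a + (d + 1) by omega] at h₁
      omega
  ext x
  rw [w0_apply]
  split_ifs with hx
  · have h₁ := hgap (M - 1 - x) x (by omega)
    have h₂ := hgap x 0 (by omega)
    have := hu.apply_lt (show 0 < M by omega)
    rw [show x + (M - 1 - x) = M - 1 by omega] at h₁
    rw [zero_add] at h₂
    omega
  · exact hu x (by omega)

lemma IsSchubertFamily.monkHolds {S : Perm ℕ → MvPolynomial ℕ ℤ} (hS : IsSchubertFamily S)
    {u : Perm ℕ} {M k : ℕ} (hu : FixesFrom u M) (hk : k ≤ M) : MonkHolds S u M k := by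
  induction hn : M * M - permLength u using Nat.strong_induction_on generalizing u k with
  | _ n ih =>
    by_cases hasc : ∃ m, m + 1 < M ∧ u m < u (m + 1)
    · obtain ⟨m, hm, hlt⟩ := hasc
      have hw : ∀ j ≤ M, MonkHolds S (u * swap m (m + 1)) M j := by
        intro j hj
        have hfix : FixesFrom (u * swap m (m + 1)) M := hu.mul_swap (by omega) hm
        have := permLength_le hfix
        have := permLength_mul_swap_succ hu hlt
        exact ih _ (by omega) hfix hj rfl
      have hne : ∀ j ≤ M, j ≠ m + 1 → MonkHolds S u M j :=
        fun j hj hjm => .of_mul_swap_of_ne hS hu hm hlt hjm (hw j hj)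
      rcases eq_or_ne k (m + 1) with rfl | hkm
      · exact .of_mul_swap_succ hS hu hm hlt (hne m (by omega) (by omega))
          (hne (m + 2) (by omega) (by omega)) (hw _ hk)
      · exact hne k hk hkm
    · push Not at hasc
      rw [eq_w0_of_forall_not_lt hu fun m hm => not_lt.2 (hasc m hm)]
      exact hS.monkHolds_w0 hk

theorem monk_formula_general
    (S : Equiv.Perm ℕ → MvPolynomial ℕ ℤ) (hS : IsSchubertFamily S)
    (u : Equiv.Perm ℕ) (hu : PermFinSupp u) (k : ℕ) :
    S u * (∑ i ∈ Finset.range k, (MvPolynomial.X i : MvPolynomial ℕ ℤ)) =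
      ∑ᶠ p ∈ {p : ℕ × ℕ | p.1 < k ∧ k ≤ p.2 ∧
          permLength (u * Equiv.swap p.1 p.2) = permLength u + 1},
        S (u * Equiv.swap p.1 p.2) := by
  obtain ⟨N, hN⟩ := hu.exists_fixesFrom
  have hfix : FixesFrom u (max N k) := hN.mono (le_max_left N k)
  rw [setOf_covers_eq_coe_filter hfix (le_max_right N k), finsum_mem_coe_finset]
  exact hS.monkHolds hfix (le_max_right N k)

/-- Monk's formula: `𝔖_u · (z_1 + ⋯ + z_k) = Σ 𝔖_{u t_{ij}}`, the sum
over all transpositions `t_{ij}` with `i ≤ k < j` (0-indexed: `i < k ≤ j`) and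
`ℓ(u t_{ij}) = ℓ(u) + 1`. -/
theorem monk_formula
    (S : Equiv.Perm ℕ → MvPolynomial ℕ ℤ) (hS : IsSchubertFamily S)
    (u : Equiv.Perm ℕ) (hu : PermFinSupp u) (k : ℕ) (hk : 0 < k) :
    S u * (∑ i ∈ Finset.range k, (MvPolynomial.X i : MvPolynomial ℕ ℤ)) =
      ∑ᶠ p ∈ {p : ℕ × ℕ | p.1 < k ∧ k ≤ p.2 ∧
          permLength (u * Equiv.swap p.1 p.2) = permLength u + 1},
        S (u * Equiv.swap p.1 p.2) :=
  monk_formula_general S hS u hu k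

end
end

section
/- For any partition λ of n, the quasisymmetric generating function of standard Young tableaux of shape λ by descents equals the Schur function: Σ_T Q_{Des(T)} = s_λ, where the sum is over all standard Young tableaux T of shape λ and Des(T) = {i ∈ {1,…,n−1} : i+1 lies in a higher row than i in T}. -/
open MvPolynomial

noncomputable section

/-! Standardization is a bijection between semistandard tableaux `S` of shape `λ` and pairs
`(T, f)` of a standard tableau `T` and a weakly increasing word `f` that increases strictly at
every descent of `T`: number the cells of `S` by increasing entry, ties broken from left to
right, to get `T`, and let `f` list the entries of `S` in that order, so that `S = f ∘ T` and `S`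
and `f` have the same content. Cells with equal entries form a horizontal strip, which is why `f`
jumps at the descents of `T`; conversely, between the entries of two cells in one column `T`
has a descent, which makes `f ∘ T` column strict. Comparing coefficients of `x^α` on both sides
gives the identity. -/

open Finset

namespace YoungDiagram

abbrev Cell (μ : YoungDiagram) : Type := {c : ℕ × ℕ // c ∈ μ.cells}

lemma card_cell (μ : YoungDiagram) : Fintype.card μ.Cell = μ.card :=
  Fintype.card_coe _

end YoungDiagram

lemma Equiv.eq_of_forall_lt_imp_lt {X : Type*} {n : ℕ} {e₁ e₂ : X ≃ Fin n}
    (h : ∀ x y, e₂ x < e₂ y → e₁ x < e₁ y) : e₁ = e₂ := by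
  have hmono : StrictMono (e₁ ∘ e₂.symm) := fun a b hab => by
    simpa using h (e₂.symm a) (e₂.symm b) (by simpa using hab)
  have hid : e₁ ∘ e₂.symm = id := (hmono.range_inj strictMono_id).mp <| by
    rw [(e₁.surjective.comp e₂.symm.surjective).range_eq, Set.range_id]
  exact Equiv.ext fun x => by simpa using congrFun hid (e₂ x)

section Words

variable {n : ℕ}

def IsDesCompatible (D : Finset ℕ) (f : Fin n → ℕ) : Prop :=
  Monotone f ∧ ∀ i : ℕ, i ∈ D → 0 < i → ∀ h : i < n, f ⟨i - 1, by omega⟩ < f ⟨i, h⟩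

lemma IsDesCompatible.lt_of_mem {D : Finset ℕ} {f : Fin n → ℕ} (hf : IsDesCompatible D f)
    {i : ℕ} (hi : i ∈ D) {a b : Fin n} (ha : (a : ℕ) < i) (hb : i ≤ b) : f a < f b :=
  calc f a ≤ f ⟨i - 1, by omega⟩ := hf.1 (Fin.mk_le_mk.2 (by omega))
    _ < f ⟨i, by omega⟩ := hf.2 i hi (by omega) _
    _ ≤ f b := hf.1 hb

lemma coeff_fundamentalQSym (D : Finset ℕ) (α : ℕ →₀ ℕ) :
    MvPowerSeries.coeff α (fundamentalQSym n D) =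
      Nat.card {f : Fin n → ℕ // IsDesCompatible D f ∧ seqMonomial f = α} :=
  congrArg Nat.cast (Nat.card_congr (Equiv.subtypeEquivRight fun _ => and_assoc.symm))

lemma mem_support_seqMonomial (f : Fin n → ℕ) (j : Fin n) : f j ∈ (seqMonomial f).support := by
  rw [Finsupp.mem_support_iff, seqMonomial, Finsupp.finsetSum_apply]
  exact (Finset.sum_pos' (fun _ _ => Nat.zero_le _) ⟨j, mem_univ _, by simp⟩).ne'

instance (D : Finset ℕ) (α : ℕ →₀ ℕ) :
    Finite {f : Fin n → ℕ // IsDesCompatible D f ∧ seqMonomial f = α} :=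
  Finite.of_injective
    (fun (f : {f : Fin n → ℕ // IsDesCompatible D f ∧ seqMonomial f = α}) (j : Fin n) =>
      (⟨f.1 j, by simpa only [f.2.2] using mem_support_seqMonomial f.1 j⟩ : α.support))
    fun f g h => Subtype.ext <| funext fun j => congrArg Subtype.val (congrFun h j)

end Words

lemma coeff_schurFunction (μ : YoungDiagram) (α : ℕ →₀ ℕ) :
    MvPowerSeries.coeff α (schurFunction μ) =
      Nat.card {T : SemistandardYoungTableau μ // ssytMonomial μ T = α} :=
  rfl

namespace SemistandardYoungTableau

variable {μ : YoungDiagram}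

lemma ext_of_cells {S S' : SemistandardYoungTableau μ}
    (h : ∀ c : μ.Cell, S c.1.1 c.1.2 = S' c.1.1 c.1.2) : S = S' := by
  ext i j
  by_cases hij : (i, j) ∈ μ
  · exact h ⟨(i, j), hij⟩
  · rw [S.zeros hij, S'.zeros hij]

def ofCells (F : μ.Cell → ℕ)
    (row_weak : ∀ {i j₁ j₂} (h₁ : (i, j₁) ∈ μ) (h₂ : (i, j₂) ∈ μ), j₁ < j₂ →
      F ⟨_, h₁⟩ ≤ F ⟨_, h₂⟩)
    (col_strict : ∀ {i₁ i₂ j} (h₁ : (i₁, j) ∈ μ) (h₂ : (i₂, j) ∈ μ), i₁ < i₂ →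
      F ⟨_, h₁⟩ < F ⟨_, h₂⟩) :
    SemistandardYoungTableau μ where
  entry i j := if h : (i, j) ∈ μ then F ⟨(i, j), h⟩ else 0
  row_weak' {i j₁ j₂} hj h := by
    rw [dif_pos (μ.up_left_mem le_rfl hj.le h), dif_pos h]
    exact row_weak _ h hj
  col_strict' {i₁ i₂ j} hi h := by
    rw [dif_pos (μ.up_left_mem hi.le le_rfl h), dif_pos h]
    exact col_strict _ h hi
  zeros' h := dif_neg h

lemma ofCells_apply {F : μ.Cell → ℕ} {hr hc} (c : μ.Cell) :
    ofCells F hr hc c.1.1 c.1.2 = F c :=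
  dif_pos c.2

lemma ssytMonomial_eq_seqMonomial (S : SemistandardYoungTableau μ) (e : μ.Cell ≃ Fin μ.card)
    (f : Fin μ.card → ℕ) (h : ∀ c, S c.1.1 c.1.2 = f (e c)) :
    ssytMonomial μ S = seqMonomial f := by
  rw [ssytMonomial, seqMonomial, ← Finset.sum_coe_sort μ.cells]
  exact Fintype.sum_equiv e _ _ fun c => by rw [h]

lemma row_le_of_entry_eq (S : SemistandardYoungTableau μ) {c d : μ.Cell}
    (hv : S c.1.1 c.1.2 = S d.1.1 d.1.2) (hcol : c.1.2 < d.1.2) : d.1.1 ≤ c.1.1 := by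
  by_contra! h
  have hmem : (c.1.1, d.1.2) ∈ μ := μ.up_left_mem h.le le_rfl d.2
  have h₁ : S c.1.1 d.1.2 < S d.1.1 d.1.2 := S.col_strict h d.2
  have h₂ : S c.1.1 c.1.2 ≤ S c.1.1 d.1.2 := S.row_weak hcol hmem
  omega

end SemistandardYoungTableau

namespace IsStandardSyt

variable {μ : YoungDiagram} {T : SemistandardYoungTableau μ} (hT : IsStandardSyt μ T)
include hT

lemma entry_lt (c : μ.Cell) : T c.1.1 c.1.2 < μ.card := by
  choose g hg using fun m : Fin μ.card => (hT m m.2).exists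
  have hinj : Function.Injective fun m => (⟨g m, (hg m).1⟩ : μ.Cell) := fun m m' h => by
    have h' : g m = g m' := congrArg Subtype.val h
    exact Fin.ext (by rw [← (hg m).2, ← (hg m').2, h'])
  obtain ⟨m, rfl⟩ := ((Fintype.bijective_iff_injective_and_card _).2
    ⟨hinj, by rw [Fintype.card_fin, μ.card_cell]⟩).2 c
  exact (hg m).2 ▸ m.2

lemma entry_injective : Function.Injective fun c : μ.Cell => T c.1.1 c.1.2 := fun c d h =>
  Subtype.ext ((hT _ (hT.entry_lt c)).unique ⟨c.2, rfl⟩ ⟨d.2, h.symm⟩)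

def cellEquiv : μ.Cell ≃ Fin μ.card :=
  Equiv.ofBijective (fun c => ⟨T c.1.1 c.1.2, hT.entry_lt c⟩) <|
    (Fintype.bijective_iff_injective_and_card _).2
      ⟨fun c d h => hT.entry_injective (Fin.val_eq_of_eq h), by rw [Fintype.card_fin, μ.card_cell]⟩

lemma col_lt_of_not_mem_sytDes {c d : μ.Cell} (hcd : T d.1.1 d.1.2 = T c.1.1 c.1.2 + 1)
    (hd : T d.1.1 d.1.2 ∉ sytDes μ T) : c.1.2 < d.1.2 := by
  have hrow : d.1.1 ≤ c.1.1 := by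
    by_contra! h
    exact hd <| mem_filter.2
      ⟨mem_Ico.2 ⟨by omega, hT.entry_lt d⟩, c.1, c.2, d.1, d.2, by omega, rfl, h⟩
  by_contra! hcol
  have h₁ : T d.1.1 d.1.2 ≤ T d.1.1 c.1.2 := T.row_weak_of_le hcol (μ.up_left_mem hrow le_rfl c.2)
  have h₂ : T d.1.1 c.1.2 ≤ T c.1.1 c.1.2 := T.col_weak hrow c.2
  omega

lemma col_lt_of_forall_not_mem_sytDes {c d : μ.Cell} (hcd : T c.1.1 c.1.2 < T d.1.1 d.1.2)
    (h : ∀ i, T c.1.1 c.1.2 < i → i ≤ T d.1.1 d.1.2 → i ∉ sytDes μ T) : c.1.2 < d.1.2 := by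
  obtain ⟨v, hv⟩ : ∃ v, T d.1.1 d.1.2 = v := ⟨_, rfl⟩
  rw [hv] at hcd h
  induction v, Nat.succ_le_of_lt hcd using Nat.le_induction generalizing d with
  | base => exact hT.col_lt_of_not_mem_sytDes hv (hv ▸ h _ (by omega) le_rfl)
  | succ v hcv ih =>
    set d' := hT.cellEquiv.symm ⟨v, by have := hT.entry_lt d; omega⟩
    have hd' : T d'.1.1 d'.1.2 = v := congrArg Fin.val (hT.cellEquiv.apply_symm_apply _)
    exact (ih (fun i hi hiv => h i hi (by omega)) (by omega) hd').trans
      (hT.col_lt_of_not_mem_sytDes (by omega) (hv ▸ h _ (by omega) le_rfl))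

end IsStandardSyt

namespace SemistandardYoungTableau

variable {μ : YoungDiagram} (S : SemistandardYoungTableau μ)

def stdKey (c : μ.Cell) : ℕ ×ₗ ℕ := toLex (S c.1.1 c.1.2, c.1.2)

lemma stdKey_injective : Function.Injective S.stdKey := by
  rintro ⟨⟨i, j⟩, hc⟩ ⟨⟨i', j'⟩, hd⟩ h
  obtain ⟨hv, rfl⟩ := Prod.mk.inj (toLex.injective h)
  rcases lt_trichotomy i i' with hi | rfl | hi
  · exact absurd hv (S.col_strict hi hd).ne
  · rfl
  · exact absurd hv (S.col_strict hi hc).ne'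

def stdRank : μ.Cell ≃ Fin μ.card :=
  (Equiv.ofInjective _ S.stdKey_injective).trans
    (Fintype.orderIsoFinOfCardEq _ <| by
      rw [Set.card_range_of_injective S.stdKey_injective, μ.card_cell]).symm.toEquiv

lemma stdRank_lt_stdRank_iff {c d : μ.Cell} :
    S.stdRank c < S.stdRank d ↔ S.stdKey c < S.stdKey d := by
  simp [stdRank, ← Subtype.coe_lt_coe]

lemma stdRank_le_stdRank_iff {c d : μ.Cell} :
    S.stdRank c ≤ S.stdRank d ↔ S.stdKey c ≤ S.stdKey d := by
  simp only [← not_lt, stdRank_lt_stdRank_iff]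

def stdWord (j : Fin μ.card) : ℕ := S (S.stdRank.symm j).1.1 (S.stdRank.symm j).1.2

lemma stdWord_stdRank (c : μ.Cell) : S.stdWord (S.stdRank c) = S c.1.1 c.1.2 := by
  simp [stdWord]

lemma stdWord_monotone : Monotone S.stdWord := fun j j' h => by
  rw [← S.stdRank.apply_symm_apply j, ← S.stdRank.apply_symm_apply j'] at h
  exact Prod.Lex.monotone_fst _ _ ((S.stdRank_le_stdRank_iff).1 h)

lemma ssytMonomial_eq_seqMonomial_stdWord : ssytMonomial μ S = seqMonomial S.stdWord :=
  S.ssytMonomial_eq_seqMonomial S.stdRank _ fun c => (S.stdWord_stdRank c).symm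

def standardize : SemistandardYoungTableau μ :=
  ofCells (fun c => S.stdRank c)
    (fun _ h₂ hj => Fin.le_def.1 <| le_of_lt <| S.stdRank_lt_stdRank_iff.2 <|
      Prod.Lex.toLex_strictMono <| Prod.mk_lt_mk_of_le_of_lt (S.row_weak_of_le hj.le h₂) hj)
    (fun _ h₂ hi => Fin.lt_def.1 <| S.stdRank_lt_stdRank_iff.2 <|
      Prod.Lex.toLex_strictMono <| Prod.mk_lt_mk_of_lt_of_le (S.col_strict hi h₂) le_rfl)

lemma standardize_apply (c : μ.Cell) : S.standardize c.1.1 c.1.2 = S.stdRank c :=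
  ofCells_apply c

lemma isStandardSyt_standardize : IsStandardSyt μ S.standardize := by
  intro m hm
  refine ⟨(S.stdRank.symm ⟨m, hm⟩).1, ⟨(S.stdRank.symm _).2, ?_⟩, ?_⟩
  · rw [standardize_apply, Equiv.apply_symm_apply]
  · rintro d ⟨hd, hdm⟩
    have hrank : S.stdRank ⟨d, hd⟩ = ⟨m, hm⟩ :=
      Fin.ext ((S.standardize_apply ⟨d, hd⟩).symm.trans hdm)
    rw [← hrank, Equiv.symm_apply_apply]

lemma cellEquiv_standardize : S.isStandardSyt_standardize.cellEquiv = S.stdRank :=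
  Equiv.ext fun c => Fin.ext (S.standardize_apply c)

lemma isDesCompatible_stdWord : IsDesCompatible (sytDes μ S.standardize) S.stdWord := by
  refine ⟨S.stdWord_monotone, fun i hi _ hin => ?_⟩
  obtain ⟨-, c, hc, d, hd, hvc, hvd, hrow⟩ := mem_filter.1 hi
  have hc' : S.stdRank ⟨c, hc⟩ = ⟨i - 1, by omega⟩ :=
    Fin.ext ((S.standardize_apply ⟨c, hc⟩).symm.trans hvc)
  have hd' : S.stdRank ⟨d, hd⟩ = ⟨i, hin⟩ :=
    Fin.ext ((S.standardize_apply ⟨d, hd⟩).symm.trans hvd)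
  rw [← hc', ← hd', stdWord_stdRank, stdWord_stdRank]
  have hkey : S.stdKey ⟨c, hc⟩ < S.stdKey ⟨d, hd⟩ :=
    S.stdRank_lt_stdRank_iff.1 (by rw [hc', hd']; exact Fin.mk_lt_mk.2 (by omega))
  rcases Prod.Lex.toLex_lt_toLex.1 hkey with hlt | ⟨heq, hcol⟩
  · exact hlt
  · exact absurd (S.row_le_of_entry_eq heq hcol) (not_le.2 hrow)

end SemistandardYoungTableau

namespace IsStandardSyt

open SemistandardYoungTableau

variable {μ : YoungDiagram} {T : SemistandardYoungTableau μ} (hT : IsStandardSyt μ T)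
  {f : Fin μ.card → ℕ} (hf : IsDesCompatible (sytDes μ T) f)
include hT hf

lemma col_lt_of_apply_eq {c d : μ.Cell} (hcd : T c.1.1 c.1.2 < T d.1.1 d.1.2)
    (heq : f (hT.cellEquiv c) = f (hT.cellEquiv d)) : c.1.2 < d.1.2 :=
  hT.col_lt_of_forall_not_mem_sytDes hcd fun _ hci hid hi =>
    (hf.lt_of_mem (a := hT.cellEquiv c) (b := hT.cellEquiv d) hi hci hid).ne heq

def relabel : SemistandardYoungTableau μ :=
  ofCells (fun c => f (hT.cellEquiv c))
    (fun _ h₂ hj => hf.1 (T.row_weak hj h₂))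
    (fun {i₁ i₂ j} h₁ h₂ hi => (hf.1 (T.col_strict hi h₂).le).lt_of_ne fun heq =>
      (hT.col_lt_of_apply_eq hf (c := ⟨(i₁, j), h₁⟩) (d := ⟨(i₂, j), h₂⟩)
        (T.col_strict hi h₂) heq).false)

lemma relabel_apply (c : μ.Cell) : hT.relabel hf c.1.1 c.1.2 = f (hT.cellEquiv c) :=
  ofCells_apply c

lemma ssytMonomial_relabel : ssytMonomial μ (hT.relabel hf) = seqMonomial f :=
  ssytMonomial_eq_seqMonomial _ hT.cellEquiv f (hT.relabel_apply hf)

lemma stdRank_relabel : (hT.relabel hf).stdRank = hT.cellEquiv :=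
  Equiv.eq_of_forall_lt_imp_lt fun c d hcd => by
    rw [stdRank_lt_stdRank_iff, stdKey, stdKey, relabel_apply, relabel_apply,
      Prod.Lex.toLex_lt_toLex]
    rcases (hf.1 hcd.le).lt_or_eq with hlt | heq
    · exact Or.inl hlt
    · exact Or.inr ⟨heq, hT.col_lt_of_apply_eq hf hcd heq⟩

lemma standardize_relabel : (hT.relabel hf).standardize = T :=
  ext_of_cells fun c => by rw [standardize_apply, stdRank_relabel]; rfl

lemma stdWord_relabel : (hT.relabel hf).stdWord = f :=
  funext fun j => by
    rw [stdWord, stdRank_relabel, relabel_apply, Equiv.apply_symm_apply]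

end IsStandardSyt

namespace SemistandardYoungTableau

variable {μ : YoungDiagram}

lemma relabel_stdWord (S : SemistandardYoungTableau μ) :
    S.isStandardSyt_standardize.relabel S.isDesCompatible_stdWord = S :=
  ext_of_cells fun c => by
    rw [IsStandardSyt.relabel_apply, cellEquiv_standardize, stdWord_stdRank]

variable (μ) in
def standardizeEquiv (α : ℕ →₀ ℕ) :
    {S : SemistandardYoungTableau μ // ssytMonomial μ S = α} ≃
      Σ T : {T : SemistandardYoungTableau μ // IsStandardSyt μ T},
        {f : Fin μ.card → ℕ // IsDesCompatible (sytDes μ T) f ∧ seqMonomial f = α} where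
  toFun S := ⟨⟨_, S.1.isStandardSyt_standardize⟩, S.1.stdWord, S.1.isDesCompatible_stdWord,
    S.1.ssytMonomial_eq_seqMonomial_stdWord.symm.trans S.2⟩
  invFun T := ⟨T.1.2.relabel T.2.2.1, (T.1.2.ssytMonomial_relabel T.2.2.1).trans T.2.2.2⟩
  left_inv S := Subtype.ext S.1.relabel_stdWord
  right_inv T := Sigma.subtype_ext (Subtype.ext (T.1.2.standardize_relabel T.2.2.1))
    (T.1.2.stdWord_relabel T.2.2.1)

instance finite_isStandardSyt : Finite {T : SemistandardYoungTableau μ // IsStandardSyt μ T} :=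
  Finite.of_injective (fun T => ⇑T.2.cellEquiv) fun _ _ h =>
    Subtype.ext <| ext_of_cells fun c => congrArg Fin.val (congrFun h c)

end SemistandardYoungTableau

/-- For any partition `λ` of `n`, the quasisymmetric generating
function of standard Young tableaux of shape `λ` by descents equals the Schur
function: `Σ_T Q_{Des(T)} = s_λ`. -/
theorem syt_qsym_generating_function_eq_schur (lam : YoungDiagram) :
    (∑ᶠ T ∈ {T : SemistandardYoungTableau lam | IsStandardSyt lam T},
      fundamentalQSym lam.card (sytDes lam T)) = schurFunction lam := by
  have := Fintype.ofFinite {T : SemistandardYoungTableau lam // IsStandardSyt lam T}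
  ext α
  simp only [Set.mem_ofPred_eq]
  rw [← finsum_subtype_eq_finsum_cond, finsum_eq_sum_of_fintype, map_sum, coeff_schurFunction]
  simp only [coeff_fundamentalQSym]
  rw [← Nat.cast_sum, ← Nat.card_sigma,
    Nat.card_congr (SemistandardYoungTableau.standardizeEquiv lam α)]

end
end
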